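/- arXiv:1506.04737 — 7 statements merged into one kernel-verified Lean document; each statement's English description precedes it below -/
import Mathlib

section
/- Let A and A' be complex n×n matrices. Then the map ε ↦ exp(A + εA') (matrix exponential) is differentiable at ε = 0, and its derivative equals [0 Iₙ] · exp(M) · [Iₙ; 0], where M is the 2n×2n block lower-triangular matrix with blocks M₁₁ = A, M₁₂ = 0, M₂₁ = A', M₂₂ = A; that is, the derivative is the lower-left n×n block of exp(M). -/
open Matrix NormedSpace

attribute [local instance] Matrix.normedAddCommGroup Matrix.normedSpace

/-!
For `ε ≠ 0`, conjugating `diag(A + εA', A)` by the unipotent matrix `[[1, 0], [ε⁻¹, 1]]` gives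
`[[A + εA', 0], [A', A]]`. Since `exp` commutes with conjugation and with block-diagonal matrices,
the lower-left block of `exp [[A + εA', 0], [A', A]]` is exactly the difference quotient
`ε⁻¹ (exp (A + εA') - exp A)`. That block depends continuously on `ε`, so letting `ε → 0`
identifies the derivative.
-/

namespace Matrix

variable {l m α 𝕂 : Type*} [Fintype l] [DecidableEq l] [Fintype m] [DecidableEq m]

def fromBlocksDiagRingHom [Ring α] :
    Matrix l l α × Matrix m m α →+* Matrix (l ⊕ m) (l ⊕ m) α where
  toFun X := fromBlocks X.1 0 0 X.2
  map_one' := fromBlocks_one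
  map_mul' X Y := by simp [fromBlocks_multiply]
  map_zero' := fromBlocks_zero
  map_add' X Y := by simp [fromBlocks_add]

variable [RCLike 𝕂]

-- `exp` on matrices is defined with the entrywise topology, but the `NormedRing` API for `exp`
-- needs completeness for the uniformity of the `ℓ∞` operator norm, which instance search misses.
open scoped Matrix.Norms.Operator in
theorem linftyOpCompleteSpace :
    @CompleteSpace (Matrix m m 𝕂) SeminormedRing.toPseudoMetricSpace.toUniformSpace :=
  FiniteDimensional.complete 𝕂 _

theorem continuous_exp : Continuous (exp : Matrix m m 𝕂 → Matrix m m 𝕂) :=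
  have := linftyOpCompleteSpace (m := m) (𝕂 := 𝕂)
  open scoped Matrix.Norms.Operator in exp_continuous

theorem exp_fromBlocks_zero_zero (X : Matrix l l 𝕂) (Y : Matrix m m 𝕂) :
    exp (fromBlocks X 0 0 Y) = fromBlocks (exp X) 0 0 (exp Y) := by
  have := linftyOpCompleteSpace (m := l) (𝕂 := 𝕂)
  have := linftyOpCompleteSpace (m := m) (𝕂 := 𝕂)
  open scoped Matrix.Norms.Operator in
  calc exp (fromBlocks X 0 0 Y) = fromBlocksDiagRingHom (exp (X, Y)) :=
        (map_exp fromBlocksDiagRingHom (continuous_fst.matrix_fromBlocks continuous_const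
          continuous_const continuous_snd) (X, Y)).symm
    _ = fromBlocks (exp X) 0 0 (exp Y) :=
        congr_arg₂ (fromBlocks · 0 0 ·) (Prod.fst_exp (X, Y)) (Prod.snd_exp (X, Y))

theorem exp_fromBlocks_mul_sub_mul (X : Matrix l l 𝕂) (Y : Matrix m m 𝕂) (C : Matrix m l 𝕂) :
    exp (fromBlocks X 0 (C * X - Y * C) Y) =
      fromBlocks (exp X) 0 (C * exp X - exp Y * C) (exp Y) := by
  let U : (Matrix (l ⊕ m) (l ⊕ m) 𝕂)ˣ :=
    ⟨fromBlocks 1 0 C 1, fromBlocks 1 0 (-C) 1, by simp [fromBlocks_multiply],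
      by simp [fromBlocks_multiply]⟩
  have hconj (P : Matrix l l 𝕂) (Q : Matrix m m 𝕂) :
      fromBlocks P 0 (C * P - Q * C) Q = U.val * fromBlocks P 0 0 Q * U⁻¹.val := by
    simp [U, fromBlocks_multiply, sub_eq_add_neg]
  rw [hconj, exp_units_conj, exp_fromBlocks_zero_zero, hconj]

theorem exp_fromBlocks_smul_sub {R : Type*} [CommSemiring R] [Algebra R 𝕂]
    (X Y : Matrix m m 𝕂) (c : R) :
    exp (fromBlocks X 0 (c • (X - Y)) Y) =
      fromBlocks (exp X) 0 (c • (exp X - exp Y)) (exp Y) := by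
  have h (P Q : Matrix m m 𝕂) : c • (P - Q) = (c • 1 : Matrix m m 𝕂) * P - Q * (c • 1) := by
    rw [Matrix.smul_mul, Matrix.mul_smul, one_mul, mul_one, smul_sub]
  rw [h, exp_fromBlocks_mul_sub_mul, h]

end Matrix

/-- The Gateaux derivative of the matrix exponential at `A` in direction `A'`
is the lower-left block of the exponential of the block matrix `[[A, 0], [A', A]]`. -/
theorem stmt_2 {n : ℕ} (A A' : Matrix (Fin n) (Fin n) ℂ) :
    HasDerivAt (fun ε : ℝ => NormedSpace.exp (A + ε • A'))
      ((NormedSpace.exp (Matrix.fromBlocks A 0 A' A)).toBlocks₂₁) 0 := by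
  let G (ε : ℝ) := (exp (fromBlocks (A + ε • A') 0 A' A)).toBlocks₂₁
  have hG : Continuous G :=
    (Matrix.continuous_exp.comp (by fun_prop)).matrix_submatrix _ _
  have hslope (ε : ℝ) (hε : ε ≠ 0) : G ε = slope (fun ε : ℝ => exp (A + ε • A')) 0 ε := by
    have hblock : fromBlocks (A + ε • A') 0 A' A =
        fromBlocks (A + ε • A') 0 (ε⁻¹ • ((A + ε • A') - A)) A := by
      rw [add_sub_cancel_left, smul_smul, inv_mul_cancel₀ hε, one_smul]
    simp only [G]
    rw [hblock, exp_fromBlocks_smul_sub, toBlocks_fromBlocks₂₁, slope_def_module, sub_zero,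
      zero_smul, add_zero]
  have hG0 : G 0 = (exp (fromBlocks A 0 A' A)).toBlocks₂₁ := by
    simp only [G, zero_smul, add_zero]
  refine hasDerivAt_iff_tendsto_slope.mpr (hG0 ▸ ?_)
  exact ((hG.tendsto 0).mono_left nhdsWithin_le_nhds).congr'
    (eventually_nhdsWithin_of_forall hslope)
end

section
/- Let 𝒜 be a unital associative ℂ-algebra, Θ a real antisymmetric n×n matrix, X : Fin n → 𝒜 satisfying [X_j, X_k] = 2iΘ_{jk}·1, R a real symmetric n×n matrix, N a real m×n matrix, J a real antisymmetric m×m matrix, and Ω := I_m + iJ with entries ω_{lp}. Define H := (1/2) Σ_{p,q} R_{pq} X_p X_q, L_l := Σ_p N_{lp} X_p, and the GKSL generator 𝒢(σ) := i[H, σ] − Σ_{l,p} ω_{lp}[σ, L_l]L_p − (1/2)[Σ_{l,p} ω_{lp} L_l L_p, σ]. Then 𝒢(X_k) = Σ_l A_{kl} X_l for all k, where A := 2Θ(R + NᵀJN); that is, the drift of the open quantum harmonic oscillator is linear: 𝒢(X) = AX. -/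
open Matrix Finset

private lemma sum_swap3 {ι κ γ M : Type*} [AddCommMonoid M] [Fintype ι] [Fintype κ] [Fintype γ]
    (f : ι → κ → γ → M) :
    ∑ i, ∑ j, ∑ k, f i j k = ∑ k, ∑ i, ∑ j, f i j k := by
  rw [show (∑ i, ∑ j, ∑ k, f i j k) = ∑ i, ∑ k, ∑ j, f i j k from
    Finset.sum_congr rfl fun _ _ => Finset.sum_comm, Finset.sum_comm]

/-- The drift of an open quantum harmonic oscillator is linear: `𝒢(X) = AX`
with `A = 2Θ(R + NᵀJN)`. -/
theorem stmt_9 {𝒜 : Type*} [Ring 𝒜] [Algebra ℂ 𝒜]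
    {n m : ℕ} (Θ R : Matrix (Fin n) (Fin n) ℝ) (hΘ : Θᵀ = -Θ) (hR : Rᵀ = R)
    (N : Matrix (Fin m) (Fin n) ℝ) (J : Matrix (Fin m) (Fin m) ℝ) (hJ : Jᵀ = -J)
    (X : Fin n → 𝒜)
    (hX : ∀ j k, X j * X k - X k * X j = (2 * Complex.I * (Θ j k : ℂ)) • (1 : 𝒜))
    (ω : Fin m → Fin m → ℂ)
    (hω : ∀ l p, ω l p = (if l = p then 1 else 0) + Complex.I * (J l p : ℂ))
    (H : 𝒜) (hH : H = ((1 : ℂ) / 2) • ∑ p, ∑ q, ((R p q : ℝ) : ℂ) • (X p * X q))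
    (L : Fin m → 𝒜) (hL : ∀ l, L l = ∑ p, ((N l p : ℝ) : ℂ) • X p)
    (𝒢 : 𝒜 → 𝒜)
    (h𝒢 : ∀ σ, 𝒢 σ = Complex.I • (H * σ - σ * H)
        - (∑ l, ∑ p, ω l p • ((σ * L l - L l * σ) * L p))
        - ((1 : ℂ) / 2) • ((∑ l, ∑ p, ω l p • (L l * L p)) * σ
            - σ * ∑ l, ∑ p, ω l p • (L l * L p)))
    (A : Matrix (Fin n) (Fin n) ℝ) (hA : A = 2 • (Θ * (R + Nᵀ * J * N))) :
    ∀ k, 𝒢 (X k) = ∑ l, ((A k l : ℝ) : ℂ) • X l := by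
  intro k
  set d : Fin m → ℂ := fun l => ∑ q, (2 * Complex.I * (Θ k q : ℂ)) * (N l q : ℂ) with hd
  -- commutator with L
  have hdl : ∀ l, X k * L l - L l * X k = d l • (1 : 𝒜) := by
    intro l
    rw [hL, Finset.mul_sum, Finset.sum_mul, ← Finset.sum_sub_distrib, hd]
    rw [Finset.sum_smul]
    refine Finset.sum_congr rfl fun q _ => ?_
    rw [mul_smul_comm, smul_mul_assoc, ← smul_sub, hX k q, smul_smul, mul_comm]
  have hLX : ∀ l, L l * X k = X k * L l - d l • (1 : 𝒜) := by
    intro l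
    have h := hdl l
    rw [sub_eq_iff_eq_add] at h
    rw [h]; abel
  -- products with X k
  have h1 : ∀ p q, X p * X q * X k - X k * (X p * X q)
      = (2 * Complex.I * (Θ q k : ℂ)) • X p + (2 * Complex.I * (Θ p k : ℂ)) • X q := by
    intro p q
    have e1 : X q * X k = X k * X q + (2 * Complex.I * (Θ q k : ℂ)) • (1 : 𝒜) := by
      have h := hX q k; rw [sub_eq_iff_eq_add] at h; rw [h]; abel
    have e2 : X p * X k = X k * X p + (2 * Complex.I * (Θ p k : ℂ)) • (1 : 𝒜) := by
      have h := hX p k; rw [sub_eq_iff_eq_add] at h; rw [h]; abel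
    rw [mul_assoc, e1, mul_add, ← mul_assoc, e2, add_mul, mul_smul_comm, mul_one,
      smul_mul_assoc, one_mul, mul_assoc]
    abel
  have h3 : ∀ l p, L l * L p * X k - X k * (L l * L p)
      = -(d p • L l) - d l • L p := by
    intro l p
    rw [mul_assoc, hLX p, mul_sub, ← mul_assoc, hLX l, mul_smul_comm, mul_one, sub_mul,
      smul_mul_assoc, one_mul, mul_assoc]
    abel
  -- piece 1
  have piece1 : Complex.I • (H * X k - X k * H)
      = ∑ q, (Complex.I * ((1 / 2) *
          ((∑ p, (R q p : ℂ) * (2 * Complex.I * (Θ p k : ℂ)))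
            + (∑ p, (R p q : ℂ) * (2 * Complex.I * (Θ p k : ℂ)))))) • X q := by
    have eH : (∑ p, ∑ q, ((R p q : ℝ) : ℂ) • (X p * X q)) * X k
        - X k * (∑ p, ∑ q, ((R p q : ℝ) : ℂ) • (X p * X q))
        = ∑ p, ∑ q, (R p q : ℂ) • ((2 * Complex.I * (Θ q k : ℂ)) • X p
            + (2 * Complex.I * (Θ p k : ℂ)) • X q) := by
      rw [Finset.sum_mul, Finset.mul_sum, ← Finset.sum_sub_distrib]
      refine Finset.sum_congr rfl fun p _ => ?_
      rw [Finset.sum_mul, Finset.mul_sum, ← Finset.sum_sub_distrib]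
      refine Finset.sum_congr rfl fun q _ => ?_
      rw [smul_mul_assoc, mul_smul_comm, ← smul_sub, h1]
    have eS : (∑ p, ∑ q, (R p q : ℂ) • ((2 * Complex.I * (Θ q k : ℂ)) • X p
            + (2 * Complex.I * (Θ p k : ℂ)) • X q))
        = ∑ q, ((∑ p, (R q p : ℂ) * (2 * Complex.I * (Θ p k : ℂ)))
            + (∑ p, (R p q : ℂ) * (2 * Complex.I * (Θ p k : ℂ)))) • X q := by
      simp only [smul_add, smul_smul, Finset.sum_add_distrib, add_smul]
      congr 1
      · exact Finset.sum_congr rfl fun p _ => Finset.sum_smul.symm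
      · rw [Finset.sum_comm]
        exact Finset.sum_congr rfl fun q _ => Finset.sum_smul.symm
    rw [hH, smul_mul_assoc, mul_smul_comm, ← smul_sub, eH, eS, Finset.smul_sum,
      Finset.smul_sum]
    exact Finset.sum_congr rfl fun q _ => by rw [smul_smul, smul_smul, mul_assoc]
  -- piece 2
  have piece2 : (∑ l, ∑ p, ω l p • ((X k * L l - L l * X k) * L p))
      = ∑ q, (∑ l, ∑ p, ω l p * (d l * (N p q : ℂ))) • X q := by
    have e : ∀ l p, ω l p • ((X k * L l - L l * X k) * L p)
        = ∑ q, (ω l p * (d l * (N p q : ℂ))) • X q := by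
      intro l p
      rw [hdl l, smul_mul_assoc, one_mul, hL p, Finset.smul_sum, Finset.smul_sum]
      exact Finset.sum_congr rfl fun q _ => by rw [smul_smul, smul_smul, mul_assoc]
    simp only [e]
    rw [sum_swap3]
    refine Finset.sum_congr rfl fun q _ => ?_
    rw [Finset.sum_smul]
    exact Finset.sum_congr rfl fun l _ => Finset.sum_smul.symm
  -- piece 3
  have piece3 : ((1 : ℂ) / 2) • ((∑ l, ∑ p, ω l p • (L l * L p)) * X k
        - X k * ∑ l, ∑ p, ω l p • (L l * L p))
      = ∑ q, (-(1 / 2) * (∑ l, ∑ p, ω l p * (d p * (N l q : ℂ) + d l * (N p q : ℂ)))) • X q := by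
    have e : ∀ l p, ω l p • (L l * L p) * X k - X k * (ω l p • (L l * L p))
        = ∑ q, (ω l p * (-(d p * (N l q : ℂ) + d l * (N p q : ℂ)))) • X q := by
      intro l p
      rw [smul_mul_assoc, mul_smul_comm, ← smul_sub, h3, hL l, hL p, Finset.smul_sum,
        Finset.smul_sum, ← Finset.sum_neg_distrib, ← Finset.sum_sub_distrib,
        Finset.smul_sum]
      refine Finset.sum_congr rfl fun q _ => ?_
      module
    have eS : (∑ l, ∑ p, ω l p • (L l * L p)) * X k - X k * ∑ l, ∑ p, ω l p • (L l * L p)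
        = ∑ q, (∑ l, ∑ p, ω l p * (-(d p * (N l q : ℂ) + d l * (N p q : ℂ)))) • X q := by
      rw [Finset.sum_mul, Finset.mul_sum, ← Finset.sum_sub_distrib]
      simp only [Finset.sum_mul, Finset.mul_sum, ← Finset.sum_sub_distrib, e]
      rw [sum_swap3]
      refine Finset.sum_congr rfl fun q _ => ?_
      rw [Finset.sum_smul]
      exact Finset.sum_congr rfl fun l _ => Finset.sum_smul.symm
    rw [eS, Finset.smul_sum]
    refine Finset.sum_congr rfl fun q _ => ?_
    rw [smul_smul]
    congr 1
    have eneg : (∑ l, ∑ p, ω l p * (-(d p * (N l q : ℂ) + d l * (N p q : ℂ))))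
        = -∑ l, ∑ p, ω l p * (d p * (N l q : ℂ) + d l * (N p q : ℂ)) := by
      rw [← Finset.sum_neg_distrib]
      refine Finset.sum_congr rfl fun l _ => ?_
      rw [← Finset.sum_neg_distrib]
      exact Finset.sum_congr rfl fun p _ => by ring
    rw [eneg]; ring
  -- assemble
  rw [h𝒢, piece1, piece2, piece3, ← Finset.sum_sub_distrib, ← Finset.sum_sub_distrib]
  refine Finset.sum_congr rfl fun q _ => ?_
  rw [← sub_smul, ← sub_smul]
  congr 1
  -- pointwise symmetries
  have hΘ' : ∀ a b : Fin n, ((Θ a b : ℝ) : ℂ) = -((Θ b a : ℝ) : ℂ) := by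
    intro a b
    have h := congrFun (congrFun hΘ b) a
    simp only [Matrix.transpose_apply, Matrix.neg_apply] at h
    rw [h]; push_cast; ring
  have hR' : ∀ a b : Fin n, ((R a b : ℝ) : ℂ) = ((R b a : ℝ) : ℂ) := by
    intro a b
    have h := congrFun (congrFun hR b) a
    simp only [Matrix.transpose_apply] at h
    rw [← h]
  have hJ' : ∀ a b : Fin m, ((J a b : ℝ) : ℂ) = -((J b a : ℝ) : ℂ) := by
    intro a b
    have h := congrFun (congrFun hJ b) a
    simp only [Matrix.transpose_apply, Matrix.neg_apply] at h
    rw [h]; push_cast; ring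
  have hωx : ∀ (l p : Fin m) (x : ℂ),
      ω l p * x = (if l = p then x else 0) + Complex.I * (J l p : ℂ) * x := by
    intro l p x
    rw [hω]
    by_cases h : l = p <;> simp [h] <;> ring
  have eT : (∑ l, ∑ p, ω l p * (d l * (N p q : ℂ)))
      = (∑ l, d l * (N l q : ℂ))
        + ∑ l, ∑ p, Complex.I * (J l p : ℂ) * (d l * (N p q : ℂ)) := by
    simp only [hωx, Finset.sum_add_distrib, Finset.sum_ite_eq, Finset.mem_univ, if_true]
  have eU : (∑ l, ∑ p, ω l p * (d p * (N l q : ℂ) + d l * (N p q : ℂ)))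
      = (∑ l, (d l * (N l q : ℂ) + d l * (N l q : ℂ)))
        + ∑ l, ∑ p, Complex.I * (J l p : ℂ) * (d p * (N l q : ℂ) + d l * (N p q : ℂ)) := by
    simp only [hωx, Finset.sum_add_distrib, Finset.sum_ite_eq, Finset.mem_univ, if_true]
  have eJs : (∑ l, ∑ p, Complex.I * (J l p : ℂ) * (d p * (N l q : ℂ) + d l * (N p q : ℂ)))
      = 0 := by
    have swap : (∑ l, ∑ p, Complex.I * (J l p : ℂ) * (d p * (N l q : ℂ)))
        = -∑ l, ∑ p, Complex.I * (J l p : ℂ) * (d l * (N p q : ℂ)) := by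
      rw [Finset.sum_comm, ← Finset.sum_neg_distrib]
      refine Finset.sum_congr rfl fun p _ => ?_
      rw [← Finset.sum_neg_distrib]
      refine Finset.sum_congr rfl fun l _ => ?_
      rw [hJ' l p]; ring
    simp only [mul_add, Finset.sum_add_distrib]
    rw [swap, neg_add_cancel]
  have eS12 : (∑ p, (R q p : ℂ) * (2 * Complex.I * (Θ p k : ℂ)))
      = ∑ p, (R p q : ℂ) * (2 * Complex.I * (Θ p k : ℂ)) :=
    Finset.sum_congr rfl fun p _ => by rw [hR' q p]
  have eIS : Complex.I * (∑ p, (R p q : ℂ) * (2 * Complex.I * (Θ p k : ℂ)))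
      = ∑ p, 2 * (Θ k p : ℂ) * (R p q : ℂ) := by
    rw [Finset.mul_sum]
    refine Finset.sum_congr rfl fun p _ => ?_
    rw [hΘ' p k]
    linear_combination (-2 * (R p q : ℂ) * (Θ k p : ℂ)) * Complex.I_mul_I
  have eW : -(∑ l, ∑ p, Complex.I * (J l p : ℂ) * (d l * (N p q : ℂ)))
      = ∑ j, 2 * (Θ k j : ℂ) * (∑ b, (∑ a, (N a j : ℂ) * (J a b : ℂ)) * (N b q : ℂ)) := by
    have expand : (∑ l, ∑ p, Complex.I * (J l p : ℂ) * (d l * (N p q : ℂ)))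
        = ∑ l, ∑ p, ∑ j, Complex.I * (J l p : ℂ)
            * ((2 * Complex.I * (Θ k j : ℂ) * (N l j : ℂ)) * (N p q : ℂ)) := by
      refine Finset.sum_congr rfl fun l _ => Finset.sum_congr rfl fun p _ => ?_
      simp only [hd]
      rw [Finset.sum_mul, Finset.mul_sum]
    rw [expand, sum_swap3, ← Finset.sum_neg_distrib]
    refine Finset.sum_congr rfl fun j _ => ?_
    rw [Finset.sum_comm, ← Finset.sum_neg_distrib, Finset.mul_sum]
    refine Finset.sum_congr rfl fun p _ => ?_
    rw [Finset.sum_mul, Finset.mul_sum, ← Finset.sum_neg_distrib]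
    refine Finset.sum_congr rfl fun l _ => ?_
    linear_combination (-2 * (J l p : ℂ) * (Θ k j : ℂ) * (N l j : ℂ) * (N p q : ℂ))
      * Complex.I_mul_I
  have hAq : ((A k q : ℝ) : ℂ) = (∑ p, 2 * (Θ k p : ℂ) * (R p q : ℂ))
      + ∑ j, 2 * (Θ k j : ℂ) * (∑ b, (∑ a, (N a j : ℂ) * (J a b : ℂ)) * (N b q : ℂ)) := by
    rw [hA]
    simp only [Matrix.smul_apply, Matrix.mul_apply, Matrix.add_apply, Matrix.transpose_apply,
      nsmul_eq_mul]
    push_cast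
    rw [Finset.mul_sum, ← Finset.sum_add_distrib]
    refine Finset.sum_congr rfl fun j _ => ?_
    ring
  rw [eT, eU, eJs, add_zero, Finset.sum_add_distrib]
  linear_combination (Complex.I / 2) * eS12 + eIS + eW - hAq
end

section
/- Under the assumptions of the open quantum harmonic oscillator (CCRs [X_j, X_k] = 2iΘ_{jk}·1 with Θ real antisymmetric, H = (1/2)Σ R_{pq}X_pX_q with R real symmetric, L_l = Σ_p N_{lp}X_p with N real m×n, Ω = I_m + iJ with J real antisymmetric, and GKSL generator 𝒢(σ) = i[H,σ] − Σ ω_{lp}[σ,L_l]L_p − ½[Σ ω_{lp}L_lL_p, σ]), define Ξ_{jk} := X_jX_k − iΘ_{jk}·1 (the symmetrized second moment matrix Re(XXᵀ)). Then for all j,k: 𝒢(Ξ_{jk}) = Σ_l A_{jl}Ξ_{lk} + Σ_l Ξ_{jl}A_{kl} + (BBᵀ)_{jk}·1, where A := 2Θ(R + NᵀJN) and B := 2ΘNᵀ; that is, 𝒢(Ξ) = AΞ + ΞAᵀ + BBᵀ. -/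
open Matrix

private lemma I_cube : Complex.I ^ 3 = -Complex.I := by
  rw [show (3:ℕ) = 2+1 from rfl, pow_succ, Complex.I_sq]; ring

private lemma collect_left {i1 i2 M : Type*} [Fintype i1] [Fintype i2] [AddCommMonoid M]
    [Module ℂ M] (f : i1 → i2 → ℂ) (V : i1 → M) :
    ∑ p, ∑ q, f p q • V p = ∑ p, (∑ q, f p q) • V p := by simp [Finset.sum_smul]

private lemma collect_right {i1 i2 M : Type*} [Fintype i1] [Fintype i2] [AddCommMonoid M]
    [Module ℂ M] (f : i1 → i2 → ℂ) (V : i2 → M) :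
    ∑ p, ∑ q, f p q • V q = ∑ q, (∑ p, f p q) • V q := by
  rw [Finset.sum_comm]; simp [Finset.sum_smul]

private lemma collect_const {i1 i2 M : Type*} [Fintype i1] [Fintype i2] [AddCommMonoid M]
    [Module ℂ M] (f : i1 → i2 → ℂ) (b : M) :
    ∑ p, ∑ q, f p q • b = (∑ p, ∑ q, f p q) • b := by simp [Finset.sum_smul]

private lemma collect3 {i1 i2 i3 M : Type*} [Fintype i1] [Fintype i2] [Fintype i3]
    [AddCommMonoid M] [Module ℂ M] (f : i1 → i2 → i3 → ℂ) (V : i3 → M) :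
    ∑ l, ∑ p, ∑ b, f l p b • V b = ∑ b, (∑ l, ∑ p, f l p b) • V b :=
  calc ∑ l, ∑ p, ∑ b, f l p b • V b = ∑ l, ∑ b, ∑ p, f l p b • V b :=
        Finset.sum_congr rfl fun l _ => Finset.sum_comm
    _ = ∑ b, ∑ l, ∑ p, f l p b • V b := Finset.sum_comm
    _ = ∑ b, (∑ l, ∑ p, f l p b) • V b := by simp [Finset.sum_smul]

private lemma sum_rot3 {α β γ M : Type*} [Fintype α] [Fintype β] [Fintype γ] [AddCommMonoid M]
    (f : α → β → γ → M) :
    ∑ c, ∑ p, ∑ l, f c p l = ∑ l, ∑ p, ∑ c, f c p l :=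
  calc ∑ c, ∑ p, ∑ l, f c p l = ∑ c, ∑ l, ∑ p, f c p l :=
        Finset.sum_congr rfl fun c _ => Finset.sum_comm
    _ = ∑ l, ∑ c, ∑ p, f c p l := Finset.sum_comm
    _ = ∑ l, ∑ p, ∑ c, f c p l := Finset.sum_congr rfl fun l _ => Finset.sum_comm

private lemma comm_triple {𝒜 : Type*} [Ring 𝒜] (s a b : 𝒜) :
    (a*b)*s - s*(a*b) = a*(b*s - s*b) + (a*s - s*a)*b := by noncomm_ring

/-- GKSL generator applied to the symmetrized second moment matrix of an open
quantum harmonic oscillator: `𝒢(Ξ) = AΞ + ΞAᵀ + BBᵀ` with `Ξ = XXᵀ − iΘ`,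
`A = 2Θ(R + NᵀJN)` and `B = 2ΘNᵀ`. -/
theorem stmt_10 {𝒜 : Type*} [Ring 𝒜] [Algebra ℂ 𝒜]
    {n m : ℕ} (Θ R : Matrix (Fin n) (Fin n) ℝ) (hΘ : Θᵀ = -Θ) (hR : Rᵀ = R)
    (N : Matrix (Fin m) (Fin n) ℝ) (J : Matrix (Fin m) (Fin m) ℝ) (hJ : Jᵀ = -J)
    (X : Fin n → 𝒜)
    (hX : ∀ j k, X j * X k - X k * X j = (2 * Complex.I * (Θ j k : ℂ)) • (1 : 𝒜))
    (ω : Fin m → Fin m → ℂ)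
    (hω : ∀ l p, ω l p = (if l = p then 1 else 0) + Complex.I * (J l p : ℂ))
    (H : 𝒜) (hH : H = ((1 : ℂ) / 2) • ∑ p, ∑ q, ((R p q : ℝ) : ℂ) • (X p * X q))
    (L : Fin m → 𝒜) (hL : ∀ l, L l = ∑ p, ((N l p : ℝ) : ℂ) • X p)
    (𝒢 : 𝒜 → 𝒜)
    (h𝒢 : ∀ σ, 𝒢 σ = Complex.I • (H * σ - σ * H)
        - (∑ l, ∑ p, ω l p • ((σ * L l - L l * σ) * L p))
        - ((1 : ℂ) / 2) • ((∑ l, ∑ p, ω l p • (L l * L p)) * σ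
            - σ * ∑ l, ∑ p, ω l p • (L l * L p)))
    (Ξ : Fin n → Fin n → 𝒜)
    (hΞ : ∀ j k, Ξ j k = X j * X k - (Complex.I * (Θ j k : ℂ)) • (1 : 𝒜))
    (A : Matrix (Fin n) (Fin n) ℝ) (hA : A = 2 • (Θ * (R + Nᵀ * J * N)))
    (B : Matrix (Fin n) (Fin m) ℝ) (hB : B = 2 • (Θ * Nᵀ)) :
    ∀ j k, 𝒢 (Ξ j k)
        = (∑ l, ((A j l : ℝ) : ℂ) • Ξ l k) + (∑ l, ((A k l : ℝ) : ℂ) • Ξ j l)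
          + (((B * Bᵀ) j k : ℝ) : ℂ) • (1 : 𝒜) := by
  intro j k
  -- basic swap
  have swap : ∀ a b, X a * X b = X b * X a + (2*Complex.I*(Θ a b : ℂ)) • (1:𝒜) := by
    intro a b
    exact (sub_eq_iff_eq_add.mp (hX a b)).trans (add_comm _ _)
  -- commutator of S := X j * X k with a single X a  (both orientations)
  have commS : ∀ a, (X j * X k) * X a - X a * (X j * X k)
      = (2*Complex.I*(Θ j a : ℂ)) • X k + (2*Complex.I*(Θ k a : ℂ)) • X j := by
    intro a
    have e : (X j * X k) * X a
        = X a * (X j * X k) + ((2*Complex.I*(Θ j a : ℂ)) • X k + (2*Complex.I*(Θ k a : ℂ)) • X j) := by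
      calc (X j * X k) * X a = X j * (X k * X a) := mul_assoc _ _ _
        _ = X j * (X a * X k + (2*Complex.I*(Θ k a : ℂ)) • 1) := by rw [swap k a]
        _ = (X j * X a) * X k + (2*Complex.I*(Θ k a : ℂ)) • X j := by
              rw [mul_add, mul_smul_comm, mul_one, ← mul_assoc]
        _ = (X a * X j + (2*Complex.I*(Θ j a : ℂ)) • 1) * X k + (2*Complex.I*(Θ k a : ℂ)) • X j := by
              rw [swap j a]
        _ = X a * (X j * X k) + ((2*Complex.I*(Θ j a : ℂ)) • X k + (2*Complex.I*(Θ k a : ℂ)) • X j) := by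
              rw [add_mul, smul_mul_assoc, one_mul, mul_assoc]; abel
    rw [e]; abel
  have commS' : ∀ a, X a * (X j * X k) - (X j * X k) * X a
      = (-(2*Complex.I*(Θ j a : ℂ))) • X k + (-(2*Complex.I*(Θ k a : ℂ))) • X j := by
    intro a
    rw [← neg_sub ((X j * X k) * X a), commS a]
    module
  -- reduce Ξ-commutators to S-commutators
  have hred : ∀ y : 𝒜, Ξ j k * y - y * Ξ j k = (X j * X k) * y - y * (X j * X k) := by
    intro y
    rw [hΞ j k]
    simp only [sub_mul, mul_sub, smul_mul_assoc, mul_smul_comm, one_mul, mul_one]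
    abel
  have hred' : ∀ y : 𝒜, y * Ξ j k - Ξ j k * y = y * (X j * X k) - (X j * X k) * y := by
    intro y
    rw [← neg_sub (Ξ j k * y), hred y, neg_sub]
  -- commutator of a quadratic monomial with S
  have key1 : ∀ p q : Fin n, (X p * X q) * (X j * X k) - (X j * X k) * (X p * X q)
      = (-(2*Complex.I*(Θ j q:ℂ))) • (X k * X p) + (-(2*Complex.I*(Θ k q:ℂ))) • (X j * X p)
        + (-(2*Complex.I*(Θ j p:ℂ))) • (X k * X q) + (-(2*Complex.I*(Θ k p:ℂ))) • (X j * X q)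
        + ((-(2*Complex.I*(Θ j q:ℂ)))*(2*Complex.I*(Θ p k:ℂ))
            + (-(2*Complex.I*(Θ k q:ℂ)))*(2*Complex.I*(Θ p j:ℂ))) • (1:𝒜) := by
    intro p q
    rw [comm_triple (X j * X k) (X p) (X q), commS' q, commS' p]
    rw [mul_add, add_mul, mul_smul_comm, mul_smul_comm, smul_mul_assoc, smul_mul_assoc,
      swap p k, swap p j]
    simp only [smul_add, smul_smul]
    module
  have hHcomm : H * Ξ j k - Ξ j k * H
      = ∑ p, ∑ q, ((1:ℂ)/2 * ((R p q : ℝ) : ℂ)) •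
          ((X p * X q) * (X j * X k) - (X j * X k) * (X p * X q)) := by
    rw [hred' H, hH]
    simp only [smul_mul_assoc, mul_smul_comm, Finset.sum_mul, Finset.mul_sum, Finset.smul_sum,
      smul_sub, smul_smul, Finset.sum_sub_distrib]
  have step1 : ∀ p q : Fin n,
      Complex.I • (((1:ℂ)/2 * ((R p q : ℝ) : ℂ)) •
          ((X p * X q) * (X j * X k) - (X j * X k) * (X p * X q)))
      = (((R p q : ℝ):ℂ)*((Θ j q : ℝ):ℂ)) • (X k * X p)
        + (((R p q : ℝ):ℂ)*((Θ k q : ℝ):ℂ)) • (X j * X p)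
        + (((R p q : ℝ):ℂ)*((Θ j p : ℝ):ℂ)) • (X k * X q)
        + (((R p q : ℝ):ℂ)*((Θ k p : ℝ):ℂ)) • (X j * X q)
        + (2*Complex.I*((R p q : ℝ):ℂ)*(((Θ j q : ℝ):ℂ)*((Θ p k : ℝ):ℂ)
            + ((Θ k q : ℝ):ℂ)*((Θ p j : ℝ):ℂ))) • (1:𝒜) := by
    intro p q
    rw [key1 p q]
    simp only [smul_add, smul_smul]
    match_scalars <;> (try ring1) <;> (ring_nf; simp only [I_cube, Complex.I_sq]; ring1)
  have hT1 : Complex.I • (H * Ξ j k - Ξ j k * H)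
      = (∑ a, (∑ q, ((R a q : ℝ):ℂ)*((Θ j q : ℝ):ℂ)) • (X k * X a))
      + (∑ a, (∑ q, ((R a q : ℝ):ℂ)*((Θ k q : ℝ):ℂ)) • (X j * X a))
      + (∑ a, (∑ p, ((R p a : ℝ):ℂ)*((Θ j p : ℝ):ℂ)) • (X k * X a))
      + (∑ a, (∑ p, ((R p a : ℝ):ℂ)*((Θ k p : ℝ):ℂ)) • (X j * X a))
      + (∑ p, ∑ q, 2*Complex.I*((R p q : ℝ):ℂ)*(((Θ j q : ℝ):ℂ)*((Θ p k : ℝ):ℂ)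
            + ((Θ k q : ℝ):ℂ)*((Θ p j : ℝ):ℂ))) • (1:𝒜) := by
    rw [hHcomm, Finset.smul_sum]
    simp only [Finset.smul_sum, step1, Finset.sum_add_distrib]
    rw [collect_left (fun p q => ((R p q : ℝ):ℂ)*((Θ j q : ℝ):ℂ)) (fun a => X k * X a),
        collect_left (fun p q => ((R p q : ℝ):ℂ)*((Θ k q : ℝ):ℂ)) (fun a => X j * X a),
        collect_right (fun p q => ((R p q : ℝ):ℂ)*((Θ j p : ℝ):ℂ)) (fun a => X k * X a),
        collect_right (fun p q => ((R p q : ℝ):ℂ)*((Θ k p : ℝ):ℂ)) (fun a => X j * X a),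
        collect_const (fun p q => 2*Complex.I*((R p q : ℝ):ℂ)*(((Θ j q : ℝ):ℂ)*((Θ p k : ℝ):ℂ)
            + ((Θ k q : ℝ):ℂ)*((Θ p j : ℝ):ℂ))) (1:𝒜)]
  -- dissipator coefficients
  obtain ⟨u, hu⟩ : ∃ u : Fin m → ℂ,
      u = fun l => ∑ a, ((N l a : ℝ):ℂ) * (2*Complex.I*((Θ j a : ℝ):ℂ)) := ⟨_, rfl⟩
  obtain ⟨v, hv⟩ : ∃ v : Fin m → ℂ,
      v = fun l => ∑ a, ((N l a : ℝ):ℂ) * (2*Complex.I*((Θ k a : ℝ):ℂ)) := ⟨_, rfl⟩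
  have hSL : ∀ l, (X j * X k) * L l - L l * (X j * X k) = u l • X k + v l • X j := by
    intro l
    rw [hL l, Finset.mul_sum, Finset.sum_mul, ← Finset.sum_sub_distrib]
    calc ∑ a, ((X j * X k) * (((N l a : ℝ):ℂ) • X a) - (((N l a : ℝ):ℂ) • X a) * (X j * X k))
        = ∑ a, (((N l a : ℝ):ℂ) • ((X j * X k) * X a - X a * (X j * X k))) := by
          simp only [mul_smul_comm, smul_mul_assoc, smul_sub]
      _ = ∑ a, ((((N l a : ℝ):ℂ) * (2*Complex.I*((Θ j a : ℝ):ℂ))) • X k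
            + (((N l a : ℝ):ℂ) * (2*Complex.I*((Θ k a : ℝ):ℂ))) • X j) := by
          refine Finset.sum_congr rfl fun a _ => ?_
          rw [commS a]; simp only [smul_add, smul_smul]
      _ = u l • X k + v l • X j := by
          rw [Finset.sum_add_distrib, ← Finset.sum_smul, ← Finset.sum_smul, hu, hv]
  have hLS : ∀ l, L l * (X j * X k) - (X j * X k) * L l = (-(u l)) • X k + (-(v l)) • X j := by
    intro l
    rw [← neg_sub ((X j * X k) * L l), hSL l]
    module
  -- Term 2
  have step2 : ∀ l p, ω l p • ((Ξ j k * L l - L l * Ξ j k) * L p)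
      = (∑ b, (ω l p * (((N p b : ℝ):ℂ) * u l)) • (X k * X b))
      + (∑ b, (ω l p * (((N p b : ℝ):ℂ) * v l)) • (X j * X b)) := by
    intro l p
    rw [hred (L l), hSL l, hL p]
    simp only [Finset.mul_sum, add_mul, smul_mul_assoc, mul_smul_comm, smul_smul, smul_add,
      Finset.smul_sum, Finset.sum_add_distrib]
  have hT2 : (∑ l, ∑ p, ω l p • ((Ξ j k * L l - L l * Ξ j k) * L p))
      = (∑ b, (∑ l, ∑ p, ω l p * (((N p b : ℝ):ℂ) * u l)) • (X k * X b))
      + (∑ b, (∑ l, ∑ p, ω l p * (((N p b : ℝ):ℂ) * v l)) • (X j * X b)) := by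
    simp only [step2, Finset.sum_add_distrib]
    rw [collect3 (fun l p b => ω l p * (((N p b : ℝ):ℂ) * u l)) (fun b => X k * X b),
        collect3 (fun l p b => ω l p * (((N p b : ℝ):ℂ) * v l)) (fun b => X j * X b)]
  -- Term 3 pieces
  have h31a : ∀ l p (a : Fin n), ((((N : Matrix (Fin m) (Fin n) ℝ) l a : ℝ):ℂ) • X a) * ((-(u p)) • X k + (-(v p)) • X j)
      = (((N l a : ℝ):ℂ) * -(u p)) • (X k * X a) + (((N l a : ℝ):ℂ) * -(v p)) • (X j * X a)
        + (((N l a : ℝ):ℂ) * -(u p) * (2*Complex.I*((Θ a k : ℝ):ℂ))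
            + ((N l a : ℝ):ℂ) * -(v p) * (2*Complex.I*((Θ a j : ℝ):ℂ))) • (1:𝒜) := by
    intro l p a
    simp only [mul_add, smul_mul_assoc, mul_smul_comm, smul_smul]
    rw [swap a k, swap a j]
    simp only [smul_add, smul_smul]
    module
  have h31 : ∀ l p, L l * ((-(u p)) • X k + (-(v p)) • X j)
      = (∑ a, (((N l a : ℝ):ℂ) * -(u p)) • (X k * X a))
        + (∑ a, (((N l a : ℝ):ℂ) * -(v p)) • (X j * X a))
        + (∑ a, (((N l a : ℝ):ℂ) * -(u p) * (2*Complex.I*((Θ a k : ℝ):ℂ))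
            + ((N l a : ℝ):ℂ) * -(v p) * (2*Complex.I*((Θ a j : ℝ):ℂ)))) • (1:𝒜) := by
    intro l p
    rw [hL l, Finset.sum_mul]
    rw [Finset.sum_congr rfl fun a _ => h31a l p a]
    rw [Finset.sum_add_distrib, Finset.sum_add_distrib, ← Finset.sum_smul]
  have h32 : ∀ l p, ((-(u l)) • X k + (-(v l)) • X j) * L p
      = (∑ b, (((N p b : ℝ):ℂ) * -(u l)) • (X k * X b))
        + (∑ b, (((N p b : ℝ):ℂ) * -(v l)) • (X j * X b)) := by
    intro l p
    rw [hL p]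
    simp only [Finset.mul_sum, add_mul, smul_mul_assoc, mul_smul_comm, smul_smul, smul_add,
      Finset.sum_add_distrib]
  have step3 : ∀ l p, ω l p • ((L l * L p) * (X j * X k) - (X j * X k) * (L l * L p))
      = (∑ a, (ω l p * (((N l a : ℝ):ℂ) * -(u p))) • (X k * X a))
      + (∑ a, (ω l p * (((N l a : ℝ):ℂ) * -(v p))) • (X j * X a))
      + (ω l p * (∑ a, (((N l a : ℝ):ℂ) * -(u p) * (2*Complex.I*((Θ a k : ℝ):ℂ))
            + ((N l a : ℝ):ℂ) * -(v p) * (2*Complex.I*((Θ a j : ℝ):ℂ))))) • (1:𝒜)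
      + (∑ b, (ω l p * (((N p b : ℝ):ℂ) * -(u l))) • (X k * X b))
      + (∑ b, (ω l p * (((N p b : ℝ):ℂ) * -(v l))) • (X j * X b)) := by
    intro l p
    rw [comm_triple (X j * X k) (L l) (L p), hLS p, hLS l, h31 l p, h32 l p]
    simp only [smul_add, Finset.smul_sum, smul_smul]
    abel
  have hΛ : (∑ l, ∑ p, ω l p • (L l * L p)) * (X j * X k) - (X j * X k) * (∑ l, ∑ p, ω l p • (L l * L p))
      = ∑ l, ∑ p, ω l p • ((L l * L p) * (X j * X k) - (X j * X k) * (L l * L p)) := by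
    simp only [Finset.sum_mul, Finset.mul_sum, smul_mul_assoc, mul_smul_comm, smul_sub,
      Finset.sum_sub_distrib]
  have hT3 : (∑ l, ∑ p, ω l p • (L l * L p)) * Ξ j k - Ξ j k * (∑ l, ∑ p, ω l p • (L l * L p))
      = (∑ a, (∑ l, ∑ p, ω l p * (((N l a : ℝ):ℂ) * -(u p))) • (X k * X a))
      + (∑ a, (∑ l, ∑ p, ω l p * (((N l a : ℝ):ℂ) * -(v p))) • (X j * X a))
      + (∑ l, ∑ p, ω l p * (∑ a, (((N l a : ℝ):ℂ) * -(u p) * (2*Complex.I*((Θ a k : ℝ):ℂ))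
            + ((N l a : ℝ):ℂ) * -(v p) * (2*Complex.I*((Θ a j : ℝ):ℂ))))) • (1:𝒜)
      + (∑ b, (∑ l, ∑ p, ω l p * (((N p b : ℝ):ℂ) * -(u l))) • (X k * X b))
      + (∑ b, (∑ l, ∑ p, ω l p * (((N p b : ℝ):ℂ) * -(v l))) • (X j * X b)) := by
    rw [hred' (∑ l, ∑ p, ω l p • (L l * L p)), hΛ]
    simp only [step3, Finset.sum_add_distrib]
    rw [collect3 (fun l p a => ω l p * (((N l a : ℝ):ℂ) * -(u p))) (fun a => X k * X a),
        collect3 (fun l p a => ω l p * (((N l a : ℝ):ℂ) * -(v p))) (fun a => X j * X a),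
        collect_const (fun l p => ω l p * ((∑ a, ((N l a : ℝ):ℂ) * -(u p) * (2*Complex.I*((Θ a k : ℝ):ℂ)))
            + ∑ a, ((N l a : ℝ):ℂ) * -(v p) * (2*Complex.I*((Θ a j : ℝ):ℂ)))) (1:𝒜),
        collect3 (fun l p b => ω l p * (((N p b : ℝ):ℂ) * -(u l))) (fun b => X k * X b),
        collect3 (fun l p b => ω l p * (((N p b : ℝ):ℂ) * -(v l))) (fun b => X j * X b)]
  -- canonicalize the RHS
  have eR1 : ∀ a, ((A j a : ℝ):ℂ) • Ξ a k
      = ((A j a : ℝ):ℂ) • (X k * X a)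
        + (((A j a : ℝ):ℂ) * (Complex.I*((Θ a k : ℝ):ℂ))) • (1:𝒜) := by
    intro a
    rw [hΞ a k, swap a k]
    simp only [smul_sub, smul_add, smul_smul]
    match_scalars <;> ring1
  have eR2 : ∀ a, ((A k a : ℝ):ℂ) • Ξ j a
      = ((A k a : ℝ):ℂ) • (X j * X a)
        + (-(((A k a : ℝ):ℂ) * (Complex.I*((Θ j a : ℝ):ℂ)))) • (1:𝒜) := by
    intro a
    rw [hΞ j a]
    simp only [smul_sub, smul_smul]
    match_scalars <;> ring1
  have eRHS : (∑ l, ((A j l : ℝ) : ℂ) • Ξ l k) + (∑ l, ((A k l : ℝ) : ℂ) • Ξ j l)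
          + (((B * Bᵀ) j k : ℝ) : ℂ) • (1 : 𝒜)
      = (∑ a, ((A j a : ℝ):ℂ) • (X k * X a)) + (∑ a, ((A k a : ℝ):ℂ) • (X j * X a))
        + ((∑ a, ((A j a : ℝ):ℂ) * (Complex.I*((Θ a k : ℝ):ℂ)))
            + (∑ a, -(((A k a : ℝ):ℂ) * (Complex.I*((Θ j a : ℝ):ℂ))))
            + (((B * Bᵀ) j k : ℝ) : ℂ)) • (1:𝒜) := by
    rw [Finset.sum_congr rfl fun a _ => eR1 a, Finset.sum_congr rfl fun a _ => eR2 a]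
    simp only [Finset.sum_add_distrib, add_smul, ← Finset.sum_smul]
    abel
  rw [h𝒢 (Ξ j k), hT1, hT2, hT3, eRHS]
  simp only [smul_add, Finset.smul_sum, smul_smul, sub_eq_add_neg, neg_add,
    ← Finset.sum_neg_distrib, neg_smul]
  have hRe : ∀ p q, ((R p q : ℝ):ℂ) = ((R q p : ℝ):ℂ) := by
    intro p q
    have h := congrFun (congrFun hR q) p
    rw [Matrix.transpose_apply] at h
    exact_mod_cast h
  have hΘe : ∀ p q, ((Θ p q : ℝ):ℂ) = -((Θ q p : ℝ):ℂ) := by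
    intro p q
    have h := congrFun (congrFun hΘ q) p
    rw [Matrix.transpose_apply, Matrix.neg_apply] at h
    exact_mod_cast h
  have hJe : ∀ p q, ((J p q : ℝ):ℂ) = -((J q p : ℝ):ℂ) := by
    intro p q
    have h := congrFun (congrFun hJ q) p
    rw [Matrix.transpose_apply, Matrix.neg_apply] at h
    exact_mod_cast h
  have hAE : ∀ (w a : Fin n), ((A w a : ℝ):ℂ)
      = 2 * (∑ q, ((R q a : ℝ):ℂ) * ((Θ w q : ℝ):ℂ))
        + 2 * (∑ l, ∑ p, ∑ b, ((Θ w b : ℝ):ℂ) * (((N l b : ℝ):ℂ) * (((J l p : ℝ):ℂ) * ((N p a : ℝ):ℂ)))) := by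
    intro w a
    rw [hA]
    push_cast [Matrix.smul_apply, Matrix.mul_apply, Matrix.add_apply, Matrix.transpose_apply,
      nsmul_eq_mul, mul_add, add_mul, Finset.sum_mul, Finset.mul_sum, Finset.sum_add_distrib]
    rw [sum_rot3 (fun c p l => (2:ℂ) * (((Θ w c : ℝ):ℂ) * (((N l c : ℝ):ℂ) * ((J l p : ℝ):ℂ) * ((N p a : ℝ):ℂ))))]
    refine congrArg₂ (· + ·) (Finset.sum_congr rfl fun q _ => by ring) ?_
    exact Finset.sum_congr rfl fun l _ => Finset.sum_congr rfl fun p _ =>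
      Finset.sum_congr rfl fun c _ => by ring
  have CGen : ∀ (w : Fin n) (uw : Fin m → ℂ),
      (uw = fun l => ∑ b, ((N l b : ℝ):ℂ) * (2*Complex.I*((Θ w b : ℝ):ℂ))) →
      ∀ a : Fin n, (∑ q, ((R a q : ℝ):ℂ) * ((Θ w q : ℝ):ℂ)) + (∑ p, ((R p a : ℝ):ℂ) * ((Θ w p : ℝ):ℂ))
        + -(∑ l, ∑ p, ω l p * (((N p a : ℝ):ℂ) * uw l))
        + -(1 / 2 * ∑ l, ∑ p, ω l p * (((N l a : ℝ):ℂ) * -uw p))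
        + -(1 / 2 * ∑ l, ∑ p, ω l p * (((N p a : ℝ):ℂ) * -uw l))
      = ((A w a : ℝ):ℂ) := by
    intro w uw huw a
    -- split ω into δ and J parts
    have hDA : (∑ l, ∑ p, ω l p * (((N p a : ℝ):ℂ) * uw l))
        = (∑ l, ((N l a : ℝ):ℂ) * uw l)
          + Complex.I * ∑ l, ∑ p, ((J l p : ℝ):ℂ) * (((N p a : ℝ):ℂ) * uw l) := by
      simp only [hω, add_mul, ite_mul, one_mul, zero_mul, Finset.sum_add_distrib,
        Finset.sum_ite_eq, Finset.mem_univ, if_true, Finset.mul_sum, mul_assoc]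
    have hDB : (∑ l, ∑ p, ω l p * (((N l a : ℝ):ℂ) * uw p))
        = (∑ l, ((N l a : ℝ):ℂ) * uw l)
          + Complex.I * ∑ l, ∑ p, ((J l p : ℝ):ℂ) * (((N l a : ℝ):ℂ) * uw p) := by
      simp only [hω, add_mul, ite_mul, one_mul, zero_mul, Finset.sum_add_distrib,
        Finset.sum_ite_eq, Finset.mem_univ, if_true, Finset.mul_sum, mul_assoc]
    have hJBA : (∑ l, ∑ p, ((J l p : ℝ):ℂ) * (((N l a : ℝ):ℂ) * uw p))
        = -(∑ l, ∑ p, ((J l p : ℝ):ℂ) * (((N p a : ℝ):ℂ) * uw l)) := by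
      rw [Finset.sum_comm]
      simp only [← Finset.sum_neg_distrib]
      refine Finset.sum_congr rfl fun p _ => Finset.sum_congr rfl fun l _ => ?_
      rw [hJe l p]; ring
    have hIJA : Complex.I * (∑ l, ∑ p, ((J l p : ℝ):ℂ) * (((N p a : ℝ):ℂ) * uw l))
        = -2 * ∑ l, ∑ p, ∑ b, ((Θ w b : ℝ):ℂ) * (((N l b : ℝ):ℂ) * (((J l p : ℝ):ℂ) * ((N p a : ℝ):ℂ))) := by
      simp only [huw, Finset.mul_sum]
      refine Finset.sum_congr rfl fun l _ => Finset.sum_congr rfl fun p _ =>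
        Finset.sum_congr rfl fun b _ => ?_
      linear_combination (2*((J l p : ℝ):ℂ)*((N p a : ℝ):ℂ)*((N l b : ℝ):ℂ)*((Θ w b : ℝ):ℂ)) * Complex.I_sq
    have hP1 : (∑ q, ((R a q : ℝ):ℂ) * ((Θ w q : ℝ):ℂ)) = ∑ q, ((R q a : ℝ):ℂ) * ((Θ w q : ℝ):ℂ) :=
      Finset.sum_congr rfl fun q _ => by rw [hRe a q]
    have hAexp := hAE w a
    simp only [mul_neg, Finset.sum_neg_distrib]
    rw [hDA, hDB, hJBA, hP1, hAexp]
    linear_combination (-1 : ℂ) * hIJA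
  have C1 : ∀ a : Fin n, (∑ q, ((R a q : ℝ):ℂ) * ((Θ j q : ℝ):ℂ)) + (∑ p, ((R p a : ℝ):ℂ) * ((Θ j p : ℝ):ℂ))
        + -(∑ l, ∑ p, ω l p * (((N p a : ℝ):ℂ) * u l))
        + -(1 / 2 * ∑ l, ∑ p, ω l p * (((N l a : ℝ):ℂ) * -u p))
        + -(1 / 2 * ∑ l, ∑ p, ω l p * (((N p a : ℝ):ℂ) * -u l))
      = ((A j a : ℝ):ℂ) := CGen j u hu
  have C2 : ∀ a : Fin n, (∑ q, ((R a q : ℝ):ℂ) * ((Θ k q : ℝ):ℂ)) + (∑ p, ((R p a : ℝ):ℂ) * ((Θ k p : ℝ):ℂ))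
        + -(∑ l, ∑ p, ω l p * (((N p a : ℝ):ℂ) * v l))
        + -(1 / 2 * ∑ l, ∑ p, ω l p * (((N l a : ℝ):ℂ) * -v p))
        + -(1 / 2 * ∑ l, ∑ p, ω l p * (((N p a : ℝ):ℂ) * -v l))
      = ((A k a : ℝ):ℂ) := CGen k v hv
  have C3 : (∑ p, ∑ q, 2 * Complex.I * ((R p q : ℝ):ℂ) * (((Θ j q : ℝ):ℂ) * ((Θ p k : ℝ):ℂ) + ((Θ k q : ℝ):ℂ) * ((Θ p j : ℝ):ℂ)))
        + -(1 / 2 * ∑ l, ∑ p, ω l p * ∑ a, (((N l a : ℝ):ℂ) * -u p * (2 * Complex.I * ((Θ a k : ℝ):ℂ))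
              + ((N l a : ℝ):ℂ) * -v p * (2 * Complex.I * ((Θ a j : ℝ):ℂ))))
      = (∑ a, ((A j a : ℝ):ℂ) * (Complex.I * ((Θ a k : ℝ):ℂ)))
        + (∑ a, -(((A k a : ℝ):ℂ) * (Complex.I * ((Θ j a : ℝ):ℂ))))
        + (((B * Bᵀ) j k : ℝ) : ℂ) := by
    have hRT1 : (∑ a, ((A j a : ℝ):ℂ) * (Complex.I * ((Θ a k : ℝ):ℂ)))
        = 2*Complex.I*(∑ a, ∑ q, ((R q a : ℝ):ℂ) * ((Θ j q : ℝ):ℂ) * ((Θ a k : ℝ):ℂ))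
          + 2*Complex.I*(∑ a, ∑ l, ∑ p, ∑ b, ((Θ j b : ℝ):ℂ) * (((N l b : ℝ):ℂ) * (((J l p : ℝ):ℂ) * ((N p a : ℝ):ℂ))) * ((Θ a k : ℝ):ℂ)) := by
      rw [Finset.sum_congr rfl fun a _ => by rw [hAE j a]]
      simp only [add_mul, Finset.sum_add_distrib, Finset.sum_mul, Finset.mul_sum]
      refine congrArg₂ (· + ·) ?_ ?_
      · exact Finset.sum_congr rfl fun a _ => Finset.sum_congr rfl fun q _ => by ring
      · exact Finset.sum_congr rfl fun a _ => Finset.sum_congr rfl fun l _ =>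
          Finset.sum_congr rfl fun p _ => Finset.sum_congr rfl fun b _ => by ring
    have hRT2 : (∑ a, -(((A k a : ℝ):ℂ) * (Complex.I * ((Θ j a : ℝ):ℂ))))
        = 2*Complex.I*(∑ a, ∑ q, ((R q a : ℝ):ℂ) * ((Θ k q : ℝ):ℂ) * ((Θ a j : ℝ):ℂ))
          + 2*Complex.I*(∑ a, ∑ l, ∑ p, ∑ b, ((Θ k b : ℝ):ℂ) * (((N l b : ℝ):ℂ) * (((J l p : ℝ):ℂ) * ((N p a : ℝ):ℂ))) * ((Θ a j : ℝ):ℂ)) := by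
      rw [Finset.sum_congr rfl fun a _ => by rw [hAE k a, hΘe j a]]
      simp only [add_mul, Finset.sum_add_distrib, Finset.sum_mul, Finset.mul_sum, mul_neg,
        neg_neg, neg_mul, Finset.sum_neg_distrib]
      refine congrArg₂ (· + ·) ?_ ?_
      · exact Finset.sum_congr rfl fun a _ => Finset.sum_congr rfl fun q _ => by ring
      · exact Finset.sum_congr rfl fun a _ => Finset.sum_congr rfl fun l _ =>
          Finset.sum_congr rfl fun p _ => Finset.sum_congr rfl fun b _ => by ring
    have hBBe : (((B * Bᵀ) j k : ℝ) : ℂ)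
        = 4 * ∑ l, ∑ a, ∑ b, ((Θ j b : ℝ):ℂ) * ((N l b : ℝ):ℂ) * (((Θ k a : ℝ):ℂ) * ((N l a : ℝ):ℂ)) := by
      rw [hB]
      push_cast [Matrix.mul_apply, Matrix.smul_apply, Matrix.transpose_apply, nsmul_eq_mul,
        Finset.mul_sum, Finset.sum_mul, Finset.sum_add_distrib]
      exact Finset.sum_congr rfl fun l _ => Finset.sum_congr rfl fun a _ =>
        Finset.sum_congr rfl fun b _ => by ring
    have hS1 : (∑ p, ∑ q, 2 * Complex.I * ((R p q : ℝ):ℂ) * (((Θ j q : ℝ):ℂ) * ((Θ p k : ℝ):ℂ) + ((Θ k q : ℝ):ℂ) * ((Θ p j : ℝ):ℂ)))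
        = 2*Complex.I*(∑ a, ∑ q, ((R q a : ℝ):ℂ) * ((Θ j q : ℝ):ℂ) * ((Θ a k : ℝ):ℂ))
          + 2*Complex.I*(∑ a, ∑ q, ((R q a : ℝ):ℂ) * ((Θ k q : ℝ):ℂ) * ((Θ a j : ℝ):ℂ)) := by
      simp only [mul_add, Finset.sum_add_distrib, Finset.mul_sum]
      refine congrArg₂ (· + ·) ?_ ?_
      · exact Finset.sum_congr rfl fun a _ => Finset.sum_congr rfl fun q _ => by rw [hRe a q]; ring
      · exact Finset.sum_congr rfl fun a _ => Finset.sum_congr rfl fun q _ => by rw [hRe a q]; ring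
    have hW : -(1 / 2 * ∑ l, ∑ p, ω l p * ∑ a, (((N l a : ℝ):ℂ) * -u p * (2 * Complex.I * ((Θ a k : ℝ):ℂ))
              + ((N l a : ℝ):ℂ) * -v p * (2 * Complex.I * ((Θ a j : ℝ):ℂ))))
        = 1/2 * (∑ l, ∑ p, ω l p * (∑ a, ((N l a : ℝ):ℂ) * u p * (2 * Complex.I * ((Θ a k : ℝ):ℂ))))
          + 1/2 * (∑ l, ∑ p, ω l p * (∑ a, ((N l a : ℝ):ℂ) * v p * (2 * Complex.I * ((Θ a j : ℝ):ℂ)))) := by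
      simp only [mul_neg, neg_mul, Finset.sum_add_distrib, Finset.sum_neg_distrib, mul_add]
      ring
    have hWu : (∑ l, ∑ p, ω l p * (∑ a, ((N l a : ℝ):ℂ) * u p * (2 * Complex.I * ((Θ a k : ℝ):ℂ))))
        = (∑ l, ∑ a, ((N l a : ℝ):ℂ) * u l * (2 * Complex.I * ((Θ a k : ℝ):ℂ)))
          + Complex.I * ∑ l, ∑ p, ((J l p : ℝ):ℂ) * (∑ a, ((N l a : ℝ):ℂ) * u p * (2 * Complex.I * ((Θ a k : ℝ):ℂ))) := by
      simp only [hω, add_mul, ite_mul, one_mul, zero_mul, Finset.sum_add_distrib,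
        Finset.sum_ite_irrel, Finset.sum_const_zero, Finset.sum_ite_eq, Finset.mem_univ, if_true,
        Finset.mul_sum, mul_assoc]
    have hWv : (∑ l, ∑ p, ω l p * (∑ a, ((N l a : ℝ):ℂ) * v p * (2 * Complex.I * ((Θ a j : ℝ):ℂ))))
        = (∑ l, ∑ a, ((N l a : ℝ):ℂ) * v l * (2 * Complex.I * ((Θ a j : ℝ):ℂ)))
          + Complex.I * ∑ l, ∑ p, ((J l p : ℝ):ℂ) * (∑ a, ((N l a : ℝ):ℂ) * v p * (2 * Complex.I * ((Θ a j : ℝ):ℂ))) := by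
      simp only [hω, add_mul, ite_mul, one_mul, zero_mul, Finset.sum_add_distrib,
        Finset.sum_ite_irrel, Finset.sum_const_zero, Finset.sum_ite_eq, Finset.mem_univ, if_true,
        Finset.mul_sum, mul_assoc]
    have hδu : (∑ l, ∑ a, ((N l a : ℝ):ℂ) * u l * (2 * Complex.I * ((Θ a k : ℝ):ℂ)))
        = 4 * ∑ l, ∑ a, ∑ b, ((Θ j b : ℝ):ℂ) * ((N l b : ℝ):ℂ) * (((Θ k a : ℝ):ℂ) * ((N l a : ℝ):ℂ)) := by
      simp only [hu, Finset.sum_mul, Finset.mul_sum]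
      refine Finset.sum_congr rfl fun l _ => Finset.sum_congr rfl fun a _ =>
        Finset.sum_congr rfl fun b _ => ?_
      rw [hΘe a k]
      linear_combination (-4*((N l a : ℝ):ℂ)*((N l b : ℝ):ℂ)*((Θ j b : ℝ):ℂ)*((Θ k a : ℝ):ℂ)) * Complex.I_sq
    have hδv : (∑ l, ∑ a, ((N l a : ℝ):ℂ) * v l * (2 * Complex.I * ((Θ a j : ℝ):ℂ)))
        = 4 * ∑ l, ∑ a, ∑ b, ((Θ j b : ℝ):ℂ) * ((N l b : ℝ):ℂ) * (((Θ k a : ℝ):ℂ) * ((N l a : ℝ):ℂ)) := by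
      simp only [hv, Finset.sum_mul, Finset.mul_sum]
      refine Finset.sum_congr rfl fun l _ => Finset.sum_comm.trans ?_
      refine Finset.sum_congr rfl fun a _ => Finset.sum_congr rfl fun b _ => ?_
      rw [hΘe b j]
      linear_combination (-4*((N l a : ℝ):ℂ)*((N l b : ℝ):ℂ)*((Θ j b : ℝ):ℂ)*((Θ k a : ℝ):ℂ)) * Complex.I_sq
    have hJu : Complex.I * (∑ l, ∑ p, ((J l p : ℝ):ℂ) * (∑ a, ((N l a : ℝ):ℂ) * u p * (2 * Complex.I * ((Θ a k : ℝ):ℂ))))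
        = 4*Complex.I*(∑ a, ∑ l, ∑ p, ∑ b, ((Θ j b : ℝ):ℂ) * (((N l b : ℝ):ℂ) * (((J l p : ℝ):ℂ) * ((N p a : ℝ):ℂ))) * ((Θ a k : ℝ):ℂ)) := by
      simp only [hu, Finset.sum_mul, Finset.mul_sum]
      rw [sum_rot3 (fun l p a => ∑ b, Complex.I * (((J l p : ℝ):ℂ) * (((N l a : ℝ):ℂ)
        * (((N p b : ℝ):ℂ) * (2 * Complex.I * ((Θ j b : ℝ):ℂ))) * (2 * Complex.I * ((Θ a k : ℝ):ℂ)))))]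
      refine Finset.sum_congr rfl fun a _ => Finset.sum_congr rfl fun l _ =>
        Finset.sum_congr rfl fun p _ => Finset.sum_congr rfl fun b _ => ?_
      rw [hJe p l]
      linear_combination (-4*Complex.I*((J l p : ℝ):ℂ)*((N p a : ℝ):ℂ)*((N l b : ℝ):ℂ)*((Θ j b : ℝ):ℂ)*((Θ a k : ℝ):ℂ)) * Complex.I_sq
    have hJv : Complex.I * (∑ l, ∑ p, ((J l p : ℝ):ℂ) * (∑ a, ((N l a : ℝ):ℂ) * v p * (2 * Complex.I * ((Θ a j : ℝ):ℂ))))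
        = 4*Complex.I*(∑ a, ∑ l, ∑ p, ∑ b, ((Θ k b : ℝ):ℂ) * (((N l b : ℝ):ℂ) * (((J l p : ℝ):ℂ) * ((N p a : ℝ):ℂ))) * ((Θ a j : ℝ):ℂ)) := by
      simp only [hv, Finset.sum_mul, Finset.mul_sum]
      rw [sum_rot3 (fun l p a => ∑ b, Complex.I * (((J l p : ℝ):ℂ) * (((N l a : ℝ):ℂ)
        * (((N p b : ℝ):ℂ) * (2 * Complex.I * ((Θ k b : ℝ):ℂ))) * (2 * Complex.I * ((Θ a j : ℝ):ℂ)))))]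
      refine Finset.sum_congr rfl fun a _ => Finset.sum_congr rfl fun l _ =>
        Finset.sum_congr rfl fun p _ => Finset.sum_congr rfl fun b _ => ?_
      rw [hJe p l]
      linear_combination (-4*Complex.I*((J l p : ℝ):ℂ)*((N p a : ℝ):ℂ)*((N l b : ℝ):ℂ)*((Θ k b : ℝ):ℂ)*((Θ a j : ℝ):ℂ)) * Complex.I_sq
    rw [hS1, hW, hWu, hWv, hδu, hδv, hJu, hJv, hRT1, hRT2, hBBe]
    ring
  trans (∑ a, ((∑ q, ((R a q : ℝ):ℂ) * ((Θ j q : ℝ):ℂ)) + (∑ p, ((R p a : ℝ):ℂ) * ((Θ j p : ℝ):ℂ))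
        + -(∑ l, ∑ p, ω l p * (((N p a : ℝ):ℂ) * u l))
        + -(1 / 2 * ∑ l, ∑ p, ω l p * (((N l a : ℝ):ℂ) * -u p))
        + -(1 / 2 * ∑ l, ∑ p, ω l p * (((N p a : ℝ):ℂ) * -u l))) • (X k * X a))
    + (∑ a, ((∑ q, ((R a q : ℝ):ℂ) * ((Θ k q : ℝ):ℂ)) + (∑ p, ((R p a : ℝ):ℂ) * ((Θ k p : ℝ):ℂ))
        + -(∑ l, ∑ p, ω l p * (((N p a : ℝ):ℂ) * v l))
        + -(1 / 2 * ∑ l, ∑ p, ω l p * (((N l a : ℝ):ℂ) * -v p))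
        + -(1 / 2 * ∑ l, ∑ p, ω l p * (((N p a : ℝ):ℂ) * -v l))) • (X j * X a))
    + ((∑ p, ∑ q, 2 * Complex.I * ((R p q : ℝ):ℂ) * (((Θ j q : ℝ):ℂ) * ((Θ p k : ℝ):ℂ) + ((Θ k q : ℝ):ℂ) * ((Θ p j : ℝ):ℂ)))
        + -(1 / 2 * ∑ l, ∑ p, ω l p * ∑ a, (((N l a : ℝ):ℂ) * -u p * (2 * Complex.I * ((Θ a k : ℝ):ℂ))
              + ((N l a : ℝ):ℂ) * -v p * (2 * Complex.I * ((Θ a j : ℝ):ℂ))))) • (1:𝒜)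
  · simp only [add_smul, neg_smul, Finset.sum_add_distrib]
    abel
  · refine congrArg₂ (· + ·) (congrArg₂ (· + ·) ?_ ?_) ?_
    · exact Finset.sum_congr rfl fun a _ => by rw [C1 a]
    · exact Finset.sum_congr rfl fun a _ => by rw [C2 a]
    · rw [C3]
end

section
/- Let 𝒜 be a unital associative ℂ-algebra with star operation, Θ a real antisymmetric n×n matrix, X : Fin n → 𝒜 satisfying [X_j, X_k] = 2iΘ_{jk}·1, N a real m×n matrix, L_l := Σ_p N_{lp}X_p, J a real antisymmetric m×m matrix, Ω := I_m + iJ with entries ω_{lp}, and M : Fin m → 𝒜 arbitrary. Then for all j,k: −2 Re( Σ_{l,p} [X_jX_k, L_l] ω_{lp} M_p ) = 4 Im( Σ_{l,p} ((ΘNᵀ)_{kl} X_j + (ΘNᵀ)_{jl} X_k) ω_{lp} M_p ), where Re a := (a + a*)/2 and Im a := (a − a*)/(2i). -/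
open Matrix

/-!
By the Leibniz rule and the canonical commutation relations,
`[X_j X_k, X_p] = 2iΘ_{kp} X_j + 2iΘ_{jp} X_k`, so by linearity `[X_j X_k, L_l]` is `2i` times the
`l`-th summand of the right-hand side. The left-hand sum is therefore `2i • T` for the right-hand
sum `T`, and `−2 Re(2i T) = 4 Im T` holds in any complex star-module.
-/

section Commutator

variable {R A ι : Type*} [CommRing R] [Ring A] [Algebra R A]

theorem mul_mul_sub_mul_mul_eq (a b c : A) :
    a * b * c - c * (a * b) = a * (b * c - c * b) + (a * c - c * a) * b := by
  noncomm_ring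

theorem mul_mul_sub_mul_mul_of_commutator_eq_smul_one (X : ι → A) (c : ι → ι → R)
    (hX : ∀ j k, X j * X k - X k * X j = c j k • (1 : A)) (j k p : ι) :
    X j * X k * X p - X p * (X j * X k) = c k p • X j + c j p • X k := by
  rw [mul_mul_sub_mul_mul_eq, hX, hX, mul_smul_one, smul_one_mul]

theorem mul_mul_sub_mul_mul_sum_smul_of_commutator_eq_smul_one [Fintype ι] (X : ι → A)
    (c : ι → ι → R) (hX : ∀ j k, X j * X k - X k * X j = c j k • (1 : A)) (a : ι → R)
    (j k : ι) :
    X j * X k * (∑ p, a p • X p) - (∑ p, a p • X p) * (X j * X k)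
      = (∑ p, c k p * a p) • X j + (∑ p, c j p * a p) • X k := by
  simp only [Finset.mul_sum, Finset.sum_mul, ← Finset.sum_sub_distrib, mul_smul_comm,
    smul_mul_assoc, ← smul_sub, mul_mul_sub_mul_mul_of_commutator_eq_smul_one X c hX,
    Finset.sum_smul, smul_add, Finset.sum_add_distrib, mul_comm (c _ _), mul_smul]

end Commutator

theorem neg_two_smul_half_smul_add_star_two_I_smul {A : Type*} [AddCommGroup A] [Module ℂ A]
    [StarAddMonoid A] [StarModule ℂ A] (a : A) :
    (-2 : ℂ) • ((1 / 2 : ℂ) • ((2 * Complex.I) • a + star ((2 * Complex.I) • a)))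
      = (4 : ℂ) • ((2 * Complex.I)⁻¹ • (a - star a)) := by
  have hinv : (2 * Complex.I)⁻¹ = -Complex.I / 2 := by
    rw [mul_inv, Complex.inv_I]; ring
  rw [star_smul, hinv]
  simp only [star_mul', Complex.star_def, Complex.conj_I, map_ofNat]
  match_scalars <;> ring

theorem stmt_11_general {𝒜 : Type*} [Ring 𝒜] [Algebra ℂ 𝒜] [StarRing 𝒜] [StarModule ℂ 𝒜]
    {n m : ℕ} (Θ : Matrix (Fin n) (Fin n) ℝ)
    (X : Fin n → 𝒜)
    (hX : ∀ j k, X j * X k - X k * X j = (2 * Complex.I * (Θ j k : ℂ)) • (1 : 𝒜))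
    (N : Matrix (Fin m) (Fin n) ℝ)
    (L : Fin m → 𝒜) (hL : ∀ l, L l = ∑ p, ((N l p : ℝ) : ℂ) • X p)
    (ω : Fin m → Fin m → ℂ)
    (M : Fin m → 𝒜) :
    ∀ j k : Fin n,
      (-2 : ℂ) • (((1 : ℂ) / 2) •
        ((∑ l, ∑ p, ω l p • ((X j * X k * L l - L l * (X j * X k)) * M p))
          + star (∑ l, ∑ p, ω l p • ((X j * X k * L l - L l * (X j * X k)) * M p))))
      = (4 : ℂ) • (((2 * Complex.I)⁻¹ : ℂ) •
        ((∑ l, ∑ p, ω l p •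
            (((((Θ * Nᵀ) k l : ℝ) : ℂ) • X j + (((Θ * Nᵀ) j l : ℝ) : ℂ) • X k) * M p))
          - star (∑ l, ∑ p, ω l p •
            (((((Θ * Nᵀ) k l : ℝ) : ℂ) • X j + (((Θ * Nᵀ) j l : ℝ) : ℂ) • X k) * M p)))) := by
  intro j k
  have hcomm : ∀ l, X j * X k * L l - L l * (X j * X k)
      = (2 * Complex.I) • ((((Θ * Nᵀ) k l : ℝ) : ℂ) • X j + (((Θ * Nᵀ) j l : ℝ) : ℂ) • X k) := by
    intro l
    rw [hL, mul_mul_sub_mul_mul_sum_smul_of_commutator_eq_smul_one X _ hX, smul_add, smul_smul,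
      smul_smul]
    simp only [mul_apply, transpose_apply, Complex.ofReal_sum, Complex.ofReal_mul,
      Finset.mul_sum, mul_assoc]
  simp only [hcomm, smul_mul_assoc, smul_comm (ω _ _) (2 * Complex.I), ← Finset.smul_sum]
  exact neg_two_smul_half_smul_add_star_two_I_smul _

/-- For an open quantum harmonic oscillator, entrywise:
`−2Re([X_jX_k, Lᵀ]ΩM) = 4Im((X_kΘ_{j•} + X_jΘ_{k•})NᵀΩM)`. -/
theorem stmt_11 {𝒜 : Type*} [Ring 𝒜] [Algebra ℂ 𝒜] [StarRing 𝒜] [StarModule ℂ 𝒜]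
    {n m : ℕ} (Θ : Matrix (Fin n) (Fin n) ℝ) (hΘ : Θᵀ = -Θ)
    (X : Fin n → 𝒜)
    (hX : ∀ j k, X j * X k - X k * X j = (2 * Complex.I * (Θ j k : ℂ)) • (1 : 𝒜))
    (hXsa : ∀ j, star (X j) = X j)
    (N : Matrix (Fin m) (Fin n) ℝ)
    (L : Fin m → 𝒜) (hL : ∀ l, L l = ∑ p, ((N l p : ℝ) : ℂ) • X p)
    (J : Matrix (Fin m) (Fin m) ℝ) (hJ : Jᵀ = -J)
    (ω : Fin m → Fin m → ℂ)
    (hω : ∀ l p, ω l p = (if l = p then 1 else 0) + Complex.I * (J l p : ℂ))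
    (M : Fin m → 𝒜) :
    ∀ j k : Fin n,
      (-2 : ℂ) • (((1 : ℂ) / 2) •
        ((∑ l, ∑ p, ω l p • ((X j * X k * L l - L l * (X j * X k)) * M p))
          + star (∑ l, ∑ p, ω l p • ((X j * X k * L l - L l * (X j * X k)) * M p))))
      = (4 : ℂ) • (((2 * Complex.I)⁻¹ : ℂ) •
        ((∑ l, ∑ p, ω l p •
            (((((Θ * Nᵀ) k l : ℝ) : ℂ) • X j + (((Θ * Nᵀ) j l : ℝ) : ℂ) • X k) * M p))
          - star (∑ l, ∑ p, ω l p •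
            (((((Θ * Nᵀ) k l : ℝ) : ℂ) • X j + (((Θ * Nᵀ) j l : ℝ) : ℂ) • X k) * M p)))) :=
  stmt_11_general Θ X hX N L hL ω M
end

section
/- Let 𝒜 be a unital associative ℂ-algebra, Θ a real antisymmetric n×n matrix, X : Fin n → 𝒜 satisfying [X_j, X_k] = 2iΘ_{jk}·1, J a real antisymmetric m×m matrix, Ω := I_m + iJ, and N, N' real m×n matrices. Then (1/2) Σ_{j,k} ( i(NᵀΩN' − N'ᵀΩN) )_{jk} X_j X_k = (1/2) Σ_{j,k} ( N'ᵀJN − NᵀJN' )_{jk} X_j X_k − ⟨NΘ, N'⟩ · 1, where ⟨NΘ, N'⟩ := Tr((NΘ)ᵀN'). -/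
open Matrix

lemma aux_anti {𝒜 : Type*} [Ring 𝒜] [Algebra ℂ 𝒜] {n : ℕ}
    (Θ : Matrix (Fin n) (Fin n) ℝ) (X : Fin n → 𝒜)
    (hX : ∀ j k, X j * X k - X k * X j = (2 * Complex.I * (Θ j k : ℂ)) • (1 : 𝒜))
    (A : Matrix (Fin n) (Fin n) ℂ) (hA : Aᵀ = -A) :
    ∑ j, ∑ k, A j k • (X j * X k)
      = (∑ j, ∑ k, A j k * (Complex.I * (Θ j k : ℂ))) • (1 : 𝒜) := by
  set T := ∑ j, ∑ k, A j k • (X j * X k) with hT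
  have swap : T = ∑ j, ∑ k, (- A j k) • (X k * X j) := by
    rw [hT, Finset.sum_comm]
    refine Finset.sum_congr rfl fun j _ => Finset.sum_congr rfl fun k _ => ?_
    have hkj : A k j = -A j k := by
      have := congrFun (congrFun hA j) k
      simpa [Matrix.transpose_apply] using this
    rw [hkj]
  have h2 : (2:ℂ) • T
      = ((2:ℂ) * ∑ j, ∑ k, A j k * (Complex.I * (Θ j k : ℂ))) • (1:𝒜) := by
    calc (2:ℂ) • T = T + T := two_smul ℂ T
    _ = ∑ j, ∑ k, (A j k • (X j * X k) + (- A j k) • (X k * X j)) := by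
        nth_rewrite 2 [swap]
        rw [hT]
        rw [← Finset.sum_add_distrib]
        exact Finset.sum_congr rfl fun j _ => (Finset.sum_add_distrib).symm
    _ = ∑ j, ∑ k, (A j k * (2 * Complex.I * (Θ j k : ℂ))) • (1:𝒜) := by
        refine Finset.sum_congr rfl fun j _ => Finset.sum_congr rfl fun k _ => ?_
        rw [neg_smul, ← sub_eq_add_neg, ← smul_sub, hX j k, smul_smul]
    _ = (∑ j, ∑ k, A j k * (2 * Complex.I * (Θ j k : ℂ))) • (1:𝒜) := by
        simp [Finset.sum_smul]
    _ = ((2:ℂ) * ∑ j, ∑ k, A j k * (Complex.I * (Θ j k : ℂ))) • (1:𝒜) := by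
        rw [Finset.mul_sum]
        congr 1
        refine Finset.sum_congr rfl fun j _ => ?_
        rw [Finset.mul_sum]
        exact Finset.sum_congr rfl fun k _ => by ring
  have := congrArg (fun z : 𝒜 => ((2:ℂ)⁻¹) • z) h2
  simpa [smul_smul, inv_mul_cancel_left₀ (two_ne_zero (α := ℂ))] using this

/-- Rewriting the quadratic drift term of the transverse Hamiltonian of an OQHO:
`½ Xᵀ(i(NᵀΩN' − N'ᵀΩN))X = ½ Xᵀ(N'ᵀJN − NᵀJN')X − ⟨NΘ, N'⟩·1`. -/
theorem stmt_13 {𝒜 : Type*} [Ring 𝒜] [Algebra ℂ 𝒜]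
    {n m : ℕ} (Θ : Matrix (Fin n) (Fin n) ℝ) (hΘ : Θᵀ = -Θ)
    (X : Fin n → 𝒜)
    (hX : ∀ j k, X j * X k - X k * X j = (2 * Complex.I * (Θ j k : ℂ)) • (1 : 𝒜))
    (J : Matrix (Fin m) (Fin m) ℝ) (hJ : Jᵀ = -J)
    (Ω : Matrix (Fin m) (Fin m) ℂ)
    (hΩ : Ω = 1 + Complex.I • J.map (Complex.ofReal))
    (N N' : Matrix (Fin m) (Fin n) ℝ)
    (Nc N'c : Matrix (Fin m) (Fin n) ℂ)
    (hNc : Nc = N.map (Complex.ofReal)) (hN'c : N'c = N'.map (Complex.ofReal)) :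
    ((1 : ℂ) / 2) • ∑ j, ∑ k,
        ((Complex.I • (Ncᵀ * Ω * N'c - N'cᵀ * Ω * Nc)) j k) • (X j * X k)
      = ((1 : ℂ) / 2) • (∑ j, ∑ k,
          (((N'ᵀ * J * N - Nᵀ * J * N') j k : ℝ) : ℂ) • (X j * X k))
        - ((((N * Θ)ᵀ * N').trace : ℝ) : ℂ) • (1 : 𝒜) := by
  -- expand one product
  have mapmul : ∀ {p q r : ℕ} (A : Matrix (Fin p) (Fin q) ℝ) (B : Matrix (Fin q) (Fin r) ℝ),
      (A * B).map Complex.ofReal = A.map Complex.ofReal * B.map Complex.ofReal := by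
    intro p q r A B
    ext i j
    simp [Matrix.mul_apply, Matrix.map_apply]
  have habs : ∀ (P Q : Matrix (Fin m) (Fin n) ℝ),
      (P.map Complex.ofReal)ᵀ * (1 + Complex.I • J.map Complex.ofReal) * (Q.map Complex.ofReal)
        = (Pᵀ * Q).map Complex.ofReal + Complex.I • (Pᵀ * J * Q).map Complex.ofReal := by
    intro P Q
    rw [Matrix.mul_add, Matrix.add_mul, Matrix.mul_one, Matrix.mul_smul, Matrix.smul_mul]
    rw [← Matrix.transpose_map]
    rw [mapmul, mapmul, mapmul]
  set S : Matrix (Fin n) (Fin n) ℝ := Nᵀ * N' - N'ᵀ * N with hS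
  have key : Complex.I • (Ncᵀ * Ω * N'c - N'cᵀ * Ω * Nc)
      = (N'ᵀ * J * N - Nᵀ * J * N').map Complex.ofReal
        + Complex.I • S.map Complex.ofReal := by
    subst hNc hN'c hΩ
    rw [habs N N', habs N' N, hS]
    rw [Matrix.map_sub (f := Complex.ofReal) (by simp), Matrix.map_sub (f := Complex.ofReal) (by simp)]
    simp only [smul_sub, smul_add, smul_smul, Complex.I_mul_I, neg_one_smul]
    abel
  -- antisymmetry of the i-part matrix
  have hSanti : Sᵀ = -S := by
    rw [hS, Matrix.transpose_sub, Matrix.transpose_mul, Matrix.transpose_mul,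
      Matrix.transpose_transpose, Matrix.transpose_transpose]
    exact (neg_sub _ _).symm
  have hA : (Complex.I • S.map Complex.ofReal)ᵀ = -(Complex.I • S.map Complex.ofReal) := by
    rw [Matrix.transpose_smul, ← Matrix.transpose_map, hSanti]
    ext i j
    simp [Matrix.map_apply]
  -- the real trace identity
  have tr : ∑ j, ∑ k, S j k * Θ j k = 2 * ((N * Θ)ᵀ * N').trace := by
    have e1 : ∑ j, ∑ k, S j k * Θ j k = (S * Θᵀ).trace := by
      simp [Matrix.trace, Matrix.mul_apply, Matrix.diag, Matrix.transpose_apply]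
    have e2 : (N'ᵀ * N * Θ).trace = -(Nᵀ * N' * Θ).trace := by
      conv_lhs => rw [← Matrix.trace_transpose]
      rw [Matrix.transpose_mul, Matrix.transpose_mul, Matrix.transpose_transpose, hΘ]
      rw [Matrix.neg_mul, Matrix.trace_neg, Matrix.trace_mul_comm]
    have e3 : ((N * Θ)ᵀ * N').trace = -(Nᵀ * N' * Θ).trace := by
      rw [Matrix.transpose_mul, hΘ]
      simp only [Matrix.neg_mul]
      rw [Matrix.trace_neg, Matrix.mul_assoc, Matrix.trace_mul_comm]
    rw [e1, hΘ]
    rw [Matrix.mul_neg, Matrix.trace_neg, hS, Matrix.sub_mul, Matrix.trace_sub, e2, e3]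
    ring
  -- apply the antisymmetric summation lemma
  have hsplit : ∑ j, ∑ k, ((Complex.I • (Ncᵀ * Ω * N'c - N'cᵀ * Ω * Nc)) j k) • (X j * X k)
      = (∑ j, ∑ k, (((N'ᵀ * J * N - Nᵀ * J * N') j k : ℝ) : ℂ) • (X j * X k))
        + ∑ j, ∑ k, ((Complex.I • S.map Complex.ofReal) j k) • (X j * X k) := by
    rw [key, ← Finset.sum_add_distrib]
    refine Finset.sum_congr rfl fun j _ => ?_
    rw [← Finset.sum_add_distrib]
    refine Finset.sum_congr rfl fun k _ => ?_
    rw [Matrix.add_apply, add_smul, Matrix.map_apply]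
  have hanti := aux_anti Θ X hX (Complex.I • S.map Complex.ofReal) hA
  -- compute the scalar
  have hscal : (∑ j, ∑ k, (Complex.I • S.map Complex.ofReal) j k * (Complex.I * (Θ j k : ℂ)))
      = -(((2 * ((N * Θ)ᵀ * N').trace : ℝ)) : ℂ) := by
    rw [← tr]
    push_cast
    rw [← Finset.sum_neg_distrib]
    refine Finset.sum_congr rfl fun j _ => ?_
    rw [← Finset.sum_neg_distrib]
    refine Finset.sum_congr rfl fun k _ => ?_
    simp [Matrix.smul_apply, Matrix.map_apply]
    ring_nf
    simp [Complex.I_sq]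
  rw [hsplit, hanti, hscal, smul_add, smul_smul]
  have hfin : ((1:ℂ)/2 * -(((2 * ((N * Θ)ᵀ * N').trace : ℝ)) : ℂ)) • (1:𝒜)
      = -(((((N * Θ)ᵀ * N').trace : ℝ) : ℂ) • (1:𝒜)) := by
    rw [← neg_smul]
    congr 1
    push_cast
    ring
  rw [hfin, ← sub_eq_add_neg]
end

section
/- Let H and K be Hermitian complex n×n matrices and t ∈ ℝ. Define Q(t) := ∫₀ᵗ exp(isH) K exp(−isH) ds. Then (i) the map ε ↦ exp(−it(H + εK)) is differentiable at ε = 0 with derivative −i · exp(−itH) · Q(t), and (ii) Q(t) is Hermitian. -/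
/-!
Duhamel's formula: differentiating `s ↦ e^{-sX} e^{sY}` and integrating over `[0, t]` gives
`e^{tY} - e^{tX} = e^{tX} ∫₀ᵗ e^{-sX} (Y - X) e^{sY} ds` in any real Banach algebra. For
`Y = X + εD` the right-hand side is `ε` times a function continuous in `ε`, whose value at `ε = 0`
is the derivative; with `X = -iH`, `D = -iK` this is `-i e^{-itH} Q(t)`. The integrand of `Q(t)` is
Hermitian for every `s`, hence so is `Q(t)`.

The sup norm on matrices is not submultiplicative, so the Banach-algebra argument is run with the
`L∞` operator norm, which induces the same topology; only the integral has to be transferred back,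
entry by entry.
-/

open Matrix NormedSpace

attribute [local instance] Matrix.normedAddCommGroup Matrix.normedSpace

theorem hasDerivAt_of_sub_eq_smul {𝕜 E : Type*} [NontriviallyNormedField 𝕜]
    [NormedAddCommGroup E] [NormedSpace 𝕜 E] {f g : 𝕜 → E} {x : 𝕜}
    (hfg : ∀ y, f y - f x = (y - x) • g y) (hg : ContinuousAt g x) :
    HasDerivAt f (g x) x := by
  refine hasDerivAt_iff_tendsto_slope.mpr <| (hg.mono_left nhdsWithin_le_nhds).congr' ?_
  filter_upwards [self_mem_nhdsWithin] with y (hy : y ≠ x)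
  rw [slope_def_module, hfg, smul_smul, inv_mul_cancel₀ (sub_ne_zero.mpr hy), one_smul]

theorem isSelfAdjoint_intervalIntegral {E : Type*} [NormedAddCommGroup E] [NormedSpace ℝ E]
    [StarAddMonoid E] [StarModule ℝ E] [ContinuousStar E] {f : ℝ → E} {a b : ℝ}
    (hf : ∀ s, IsSelfAdjoint (f s)) : IsSelfAdjoint (∫ s in a..b, f s) := by
  have hstar (μ : MeasureTheory.Measure ℝ) : star (∫ s, f s ∂μ) = ∫ s, f s ∂μ := by
    rw [← starL'_apply (R := ℝ), ← (starL' ℝ).integral_comp_comm]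
    simp only [starL'_apply, (hf _).star_eq]
  rw [IsSelfAdjoint, intervalIntegral.intervalIntegral_eq_integral_uIoc, star_smul, star_trivial,
    hstar]

open Complex in
theorem isSelfAdjoint_exp_smul_mul_mul_exp_neg_smul {𝔸 : Type*} [Ring 𝔸] [StarRing 𝔸]
    [Algebra ℂ 𝔸] [StarModule ℂ 𝔸] [TopologicalSpace 𝔸] [IsTopologicalRing 𝔸] [T2Space 𝔸]
    [ContinuousStar 𝔸] {H K : 𝔸} (hH : IsSelfAdjoint H) (hK : IsSelfAdjoint K) (s : ℝ) :
    IsSelfAdjoint (exp (((s : ℂ) * I) • H) * K * exp ((-((s : ℂ) * I)) • H)) := by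
  have hconj : star ((s : ℂ) * I) = -((s : ℂ) * I) := by simp
  rw [IsSelfAdjoint, star_mul, star_mul, star_exp, star_exp, star_smul, star_smul, hH.star_eq,
    hK.star_eq, star_neg, hconj, neg_neg, mul_assoc]

section BanachAlgebra

variable {𝔸 : Type*} [NormedRing 𝔸] [NormedAlgebra ℝ 𝔸] [CompleteSpace 𝔸]

@[fun_prop]
theorem exp_continuous_of_real : Continuous (exp : 𝔸 → 𝔸) :=
  let _ := NormedAlgebra.restrictScalars ℚ ℝ 𝔸
  exp_continuous

theorem hasDerivAt_exp_neg_smul_mul_exp_smul (X Y : 𝔸) (s : ℝ) :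
    HasDerivAt (fun u : ℝ => exp (-u • X) * exp (u • Y))
      (exp (-s • X) * (Y - X) * exp (s • Y)) s := by
  have hX : HasDerivAt (fun u : ℝ => exp (u • -X)) (exp (s • -X) * -X) s :=
    hasDerivAt_exp_smul_const (-X) s
  convert hX.mul (hasDerivAt_exp_smul_const' (𝕂 := ℝ) Y s) using 1
  · simp only [neg_smul, smul_neg]; rfl
  · rw [smul_neg, ← neg_smul]
    noncomm_ring

theorem exp_smul_sub_exp_smul (X Y : 𝔸) (t : ℝ) :
    exp (t • Y) - exp (t • X) =
      exp (t • X) * ∫ s in (0 : ℝ)..t, exp (-s • X) * (Y - X) * exp (s • Y) := by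
  have hcont : Continuous fun s : ℝ => exp (-s • X) * (Y - X) * exp (s • Y) := by fun_prop
  have hinv : exp (t • X) * exp (-t • X) = 1 := by
    let _ := NormedAlgebra.restrictScalars ℚ ℝ 𝔸
    rw [← NormedSpace.exp_add_of_commute ((Commute.refl X).smul_left t |>.smul_right (-t)),
      ← add_smul, add_neg_cancel, zero_smul, exp_zero]
  rw [intervalIntegral.integral_eq_sub_of_hasDerivAt
    (fun s _ => hasDerivAt_exp_neg_smul_mul_exp_smul X Y s) (hcont.intervalIntegrable 0 t)]
  simp only [neg_zero, zero_smul, exp_zero, mul_one, mul_sub, ← mul_assoc, hinv, one_mul]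

theorem hasDerivAt_exp_smul_add_smul (X D : 𝔸) (t : ℝ) :
    HasDerivAt (fun ε : ℝ => exp (t • (X + ε • D)))
      (exp (t • X) * ∫ s in (0 : ℝ)..t, exp (-s • X) * D * exp (s • X)) 0 := by
  have hcont : Continuous fun ε : ℝ =>
      exp (t • X) * ∫ s in (0 : ℝ)..t, exp (-s • X) * D * exp (s • (X + ε • D)) := by
    fun_prop
  refine (hasDerivAt_of_sub_eq_smul (fun ε => ?_) hcont.continuousAt).congr_deriv ?_
  · rw [zero_smul, add_zero, exp_smul_sub_exp_smul, add_sub_cancel_left, sub_zero]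
    simp only [mul_smul_comm, smul_mul_assoc, intervalIntegral.integral_smul]
  · simp

end BanachAlgebra

namespace Matrix

variable {m : Type*} [Fintype m]

theorem intervalIntegral_linftyOp {n α : Type*} [Fintype n]
    [NormedAddCommGroup α] [NormedSpace ℝ α] [FiniteDimensional ℝ α]
    {f : ℝ → Matrix m n α} (hf : Continuous f) (a b : ℝ) :
    @intervalIntegral _ Matrix.linftyOpNormedAddCommGroup Matrix.linftyOpNormedSpace f a b
      MeasureTheory.volume = ∫ s in a..b, f s := by
  ext i j
  have h_sup := (⟨entryLinearMap ℝ α i j, by fun_prop⟩ : Matrix m n α →L[ℝ] α)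
    |>.intervalIntegral_comp_comm (hf.intervalIntegrable (μ := MeasureTheory.volume) a b)
  open scoped Matrix.Norms.Operator in
  have h_linfty := (⟨entryLinearMap ℝ α i j, by fun_prop⟩ : Matrix m n α →L[ℝ] α)
    |>.intervalIntegral_comp_comm (hf.intervalIntegrable (μ := MeasureTheory.volume) a b)
  exact h_linfty.symm.trans h_sup

variable [DecidableEq m] {𝔸 : Type*} [NormedRing 𝔸] [NormedAlgebra ℝ 𝔸] [FiniteDimensional ℝ 𝔸]

@[fun_prop]
theorem exp_continuous : Continuous (exp : Matrix m m 𝔸 → Matrix m m 𝔸) :=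
  open scoped Matrix.Norms.Operator in exp_continuous_of_real

theorem hasDerivAt_exp_smul_add_smul (X D : Matrix m m 𝔸) (t : ℝ) :
    HasDerivAt (fun ε : ℝ => exp (t • (X + ε • D)))
      (exp (t • X) * ∫ s in (0 : ℝ)..t, exp (-s • X) * D * exp (s • X)) 0 := by
  have hcont : Continuous fun s : ℝ => exp (-s • X) * D * exp (s • X) := by fun_prop
  rw [← intervalIntegral_linftyOp hcont]
  open scoped Matrix.Norms.Operator in exact _root_.hasDerivAt_exp_smul_add_smul X D t

open Complex in
theorem hasDerivAt_exp_neg_I_smul_add_smul (H K : Matrix m m ℂ) (t : ℝ) :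
    HasDerivAt (fun ε : ℝ => exp ((-(I * t)) • (H + ε • K)))
      ((-I) • (exp ((-(I * t)) • H) *
        ∫ s in (0 : ℝ)..t, exp (((s : ℂ) * I) • H) * K * exp ((-((s : ℂ) * I)) • H))) 0 := by
  convert hasDerivAt_exp_smul_add_smul (-(I • H)) (-(I • K)) t using 1
  · funext ε
    congr 1
    match_scalars <;> simp [Complex.coe_algebraMap] <;> ring
  · have hX (r : ℝ) : r • -(I • H) = (-((r : ℂ) * I)) • H := by
      rw [smul_neg, ← smul_assoc, Complex.real_smul, ← neg_smul]
    simp only [hX, Complex.ofReal_neg, neg_mul, neg_neg]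
    simp only [← neg_smul, mul_smul_comm, smul_mul_assoc, intervalIntegral.integral_smul,
      mul_comm I]

end Matrix

/-- Transverse Hamiltonian of an isolated system: for the perturbed unitary
`U_ε(t) = e^{−it(H+εK)}`, the derivative at `ε = 0` is `−i e^{−itH} Q(t)` with
`Q(t) = ∫₀ᵗ e^{isH} K e^{−isH} ds`, and `Q(t)` is Hermitian. -/
theorem stmt_14 {n : ℕ} (H K : Matrix (Fin n) (Fin n) ℂ)
    (hH : Hᴴ = H) (hK : Kᴴ = K) (t : ℝ)
    (Q : Matrix (Fin n) (Fin n) ℂ)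
    (hQ : Q = ∫ s in (0 : ℝ)..t,
        exp (((s : ℂ) * Complex.I) • H) * K * exp ((-((s : ℂ) * Complex.I)) • H)) :
    HasDerivAt (fun ε : ℝ => exp ((-(Complex.I * (t : ℂ))) • (H + ε • K)))
        ((-Complex.I) • (exp ((-(Complex.I * (t : ℂ))) • H) * Q)) 0
      ∧ Qᴴ = Q := by
  subst hQ
  exact ⟨Matrix.hasDerivAt_exp_neg_I_smul_add_smul H K t,
    isSelfAdjoint_intervalIntegral fun s => isSelfAdjoint_exp_smul_mul_mul_exp_neg_smul hH hK s⟩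
end

section
/- Let 𝒜 be a unital associative ℂ-algebra. Let H, Γ, ξ ∈ 𝒜, L : Fin m → 𝒜, Φ : Fin m → 𝒜, Ψ : Fin μ → 𝒜, and suppose ξ, Γ, every Φ_j and every Ψ_k commute with H and with every L_l (while ξ need not commute with Φ, Ψ or Γ). Let J be a real antisymmetric m×m matrix, Ω := I_m + iJ with entries ω_{lp}, and ℧ := I_μ + iJ' with J' a real antisymmetric μ×μ matrix, entries ℧_{lp}. Define the composite Hamiltonian bH := H + Γ + Σ_{l,p} J_{lp} Φ_l L_p, the composite coupling vector bL := (L_1+Φ_1, …, L_m+Φ_m, Ψ_1, …, Ψ_μ), the block-diagonal Itô matrix bΩ := diag(Ω, ℧), and the generator bG(ξ) := i[bH, ξ] − Σ_{a,b} bΩ_{ab}[ξ, bL_a] bL_b − (1/2)[Σ_{a,b} bΩ_{ab} bL_a bL_b, ξ]. Also define Δ(ξ) := −Σ_{l,p} ω_{lp}[ξ, Φ_l]Φ_p − Σ_{l,p} ℧_{lp}[ξ, Ψ_l]Ψ_p − (1/2)[Σ ω_{lp}Φ_lΦ_p + Σ ℧_{lp}Ψ_lΨ_p, ξ]. Then bG(ξ)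 = i[Γ, ξ] + Δ(ξ) − 2i Σ_{l,p} [ξ, Φ_l] J_{lp} L_p. -/
/-!
With the GKSL dissipator `D_Ω(K) ζ = -∑ Ω_ab ⁅ζ, K_a⁆ K_b - ½ ⁅∑ Ω_ab K_a K_b, ζ⁆`, the drift is
`bG = i⁅bH, ·⁆ + D_bΩ(bL)` and `Δ = D_Ω(Φ) + D_℧(Ψ)`. The dissipator of the block-diagonal `bΩ` splits
into its two blocks. Since `ξ` and `Φ` commute with `L`, expanding `D_Ω(L + Φ)` leaves `D_Ω(Φ)` plus
cross terms in which only the antisymmetric part `(Ω - Ωᵀ)/2 = iJ` of `Ω` survives, giving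
`-i ∑ J_lp ⁅ξ, Φ_l⁆ L_p`; the Hamiltonian part `i⁅ΦᵀJL, ξ⁆` contributes the same amount once more,
while `H` drops out because it commutes with `ξ`.
-/

open Matrix

section Commutator

variable {R : Type*} [Ring R] {x y z : R}

lemma lie_mul_of_commute_right (hz : Commute z x) : ⁅y * z, x⁆ = ⁅y, x⁆ * z := by
  simp only [Ring.lie_def, sub_mul, mul_assoc, hz.eq]

lemma lie_mul_of_commute_left (hx : Commute z x) (hy : Commute z y) : ⁅z * y, x⁆ = ⁅y, x⁆ * z := by
  rw [hy.eq, lie_mul_of_commute_right hx]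

end Commutator

section Dissipator

attribute [local instance] LieRing.ofAssociativeRing

variable {𝒜 : Type*} [Ring 𝒜] [Algebra ℂ 𝒜] {ι κ : Type*} [Fintype ι] [Fintype κ]

noncomputable def dissipator (Ω : Matrix ι ι ℂ) (K : ι → 𝒜) (ζ : 𝒜) : 𝒜 :=
  -(∑ a, ∑ b, Ω a b • (⁅ζ, K a⁆ * K b)) - (1 / 2 : ℂ) • ⁅∑ a, ∑ b, Ω a b • (K a * K b), ζ⁆

lemma dissipator_eq_sum (Ω : Matrix ι ι ℂ) (K : ι → 𝒜) (ζ : 𝒜) :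
    dissipator Ω K ζ = ∑ a, ∑ b, Ω a b • (-(⁅ζ, K a⁆ * K b) - (1 / 2 : ℂ) • ⁅K a * K b, ζ⁆) := by
  simp only [dissipator, sum_lie, smul_lie, Finset.smul_sum, smul_sub, smul_neg,
    Finset.sum_sub_distrib, Finset.sum_neg_distrib, smul_comm (1 / 2 : ℂ)]

lemma dissipator_fromBlocks (Ω : Matrix ι ι ℂ) (℧ : Matrix κ κ ℂ) (K : ι → 𝒜) (K' : κ → 𝒜)
    (ζ : 𝒜) :
    dissipator (fromBlocks Ω 0 0 ℧) (Sum.elim K K') ζ = dissipator Ω K ζ + dissipator ℧ K' ζ := by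
  simp only [dissipator_eq_sum, Fintype.sum_sum_type, fromBlocks_apply₁₁, fromBlocks_apply₁₂,
    fromBlocks_apply₂₁, fromBlocks_apply₂₂, Sum.elim_inl, Sum.elim_inr, Matrix.zero_apply,
    zero_smul, Finset.sum_const_zero, add_zero, zero_add]

lemma dissipator_add_of_commute (Ω : Matrix ι ι ℂ) (L Φ : ι → 𝒜) (ξ : 𝒜)
    (hξL : ∀ l, Commute ξ (L l)) (hΦL : ∀ j l, Commute (Φ j) (L l)) :
    dissipator Ω (fun l => L l + Φ l) ξ
      = dissipator Ω Φ ξ + ∑ l, ∑ p, ((Ω p l - Ω l p) / 2) • (⁅ξ, Φ l⁆ * L p) := by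
  have hdrift : ∀ l p, ⁅ξ, L l + Φ l⁆ * (L p + Φ p) = ⁅ξ, Φ l⁆ * Φ p + ⁅ξ, Φ l⁆ * L p := by
    intro l p
    rw [lie_add, (hξL l).lie_eq, zero_add, mul_add, add_comm]
  have hsquare : ∀ l p, ⁅(L l + Φ l) * (L p + Φ p), ξ⁆
      = ⁅Φ l * Φ p, ξ⁆ - ⁅ξ, Φ p⁆ * L l - ⁅ξ, Φ l⁆ * L p := by
    intro l p
    have hLL : ⁅L l * L p, ξ⁆ = 0 := ((hξL l).symm.mul_left (hξL p).symm).lie_eq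
    rw [add_mul, mul_add, mul_add, add_lie, add_lie, add_lie, hLL,
      lie_mul_of_commute_left (hξL l).symm (hΦL p l).symm,
      lie_mul_of_commute_right (hξL p).symm, ← lie_skew ξ (Φ p), ← lie_skew ξ (Φ l)]
    noncomm_ring
  have hterm : ∀ l p, Ω l p • (-(⁅ξ, L l + Φ l⁆ * (L p + Φ p))
        - (1 / 2 : ℂ) • ⁅(L l + Φ l) * (L p + Φ p), ξ⁆)
      = Ω l p • (-(⁅ξ, Φ l⁆ * Φ p) - (1 / 2 : ℂ) • ⁅Φ l * Φ p, ξ⁆)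
        + (Ω l p / 2) • (⁅ξ, Φ p⁆ * L l) - (Ω l p / 2) • (⁅ξ, Φ l⁆ * L p) := by
    intro l p
    rw [hdrift, hsquare]
    module
  simp only [dissipator_eq_sum, hterm, Finset.sum_add_distrib, Finset.sum_sub_distrib, sub_div,
    sub_smul]
  rw [Finset.sum_comm (f := fun l p => (Ω l p / 2) • (⁅ξ, Φ p⁆ * L l)), add_sub_assoc]

lemma sum_smul_mul_lie_of_commute (c : ι → κ → ℂ) (Φ : ι → 𝒜) (L : κ → 𝒜) (ξ : 𝒜)
    (hξL : ∀ p, Commute ξ (L p)) :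
    ⁅∑ l, ∑ p, c l p • (Φ l * L p), ξ⁆ = -∑ l, ∑ p, c l p • (⁅ξ, Φ l⁆ * L p) := by
  have hterm : ∀ l p, ⁅Φ l * L p, ξ⁆ = -(⁅ξ, Φ l⁆ * L p) := fun l p => by
    rw [lie_mul_of_commute_right (hξL p).symm, ← lie_skew, neg_mul]
  simp only [sum_lie, smul_lie, hterm, smul_neg, Finset.sum_neg_distrib]

lemma lie_add_add_sum_smul_mul_of_commute (H Γ ξ : 𝒜) (c : ι → κ → ℂ) (Φ : ι → 𝒜) (L : κ → 𝒜)
    (hξH : Commute ξ H) (hξL : ∀ p, Commute ξ (L p)) :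
    ⁅H + Γ + ∑ l, ∑ p, c l p • (Φ l * L p), ξ⁆
      = ⁅Γ, ξ⁆ - ∑ l, ∑ p, c l p • (⁅ξ, Φ l⁆ * L p) := by
  rw [add_lie, add_lie, hξH.symm.lie_eq, zero_add, sum_smul_mul_lie_of_commute _ _ _ _ hξL,
    sub_eq_add_neg]

end Dissipator

lemma one_add_I_smul_sub_swap_div_two {n : Type*} [DecidableEq n] (J : Matrix n n ℝ)
    (hJ : Jᵀ = -J) (l p : n) :
    ((1 + Complex.I • J.map Complex.ofReal) p l - (1 + Complex.I • J.map Complex.ofReal) l p) / 2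
      = -(Complex.I * J l p) := by
  have hJpl : J p l = -J l p := by simpa using congrFun (congrFun hJ l) p
  simp only [Matrix.add_apply, one_apply, eq_comm (a := p), Matrix.smul_apply, map_apply, hJpl,
    smul_eq_mul, Complex.ofReal_neg]
  ring

theorem stmt_15_general {𝒜 : Type*} [Ring 𝒜] [Algebra ℂ 𝒜]
    {m μ : ℕ} (H Γ ξ : 𝒜) (L Φ : Fin m → 𝒜) (Ψ : Fin μ → 𝒜)
    (hξH : Commute ξ H)
    (hξL : ∀ l, Commute ξ (L l))
    (hΦL : ∀ j l, Commute (Φ j) (L l))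
    (J : Matrix (Fin m) (Fin m) ℝ) (hJ : Jᵀ = -J)
    (Ω : Matrix (Fin m) (Fin m) ℂ)
    (hΩ : Ω = 1 + Complex.I • J.map (Complex.ofReal))
    (℧ : Matrix (Fin μ) (Fin μ) ℂ)
    (bΩ : Matrix (Fin m ⊕ Fin μ) (Fin m ⊕ Fin μ) ℂ)
    (hbΩ : bΩ = Matrix.fromBlocks Ω 0 0 ℧)
    (bL : Fin m ⊕ Fin μ → 𝒜) (hbL : bL = Sum.elim (fun l => L l + Φ l) Ψ)
    (bH : 𝒜) (hbH : bH = H + Γ + ∑ l, ∑ p, ((J l p : ℝ) : ℂ) • (Φ l * L p))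
    (bG : 𝒜 → 𝒜)
    (hbG : ∀ ζ, bG ζ = Complex.I • (bH * ζ - ζ * bH)
        - (∑ a, ∑ b, bΩ a b • ((ζ * bL a - bL a * ζ) * bL b))
        - ((1 : ℂ) / 2) • ((∑ a, ∑ b, bΩ a b • (bL a * bL b)) * ζ
            - ζ * ∑ a, ∑ b, bΩ a b • (bL a * bL b)))
    (Δ : 𝒜 → 𝒜)
    (hΔ : ∀ ζ, Δ ζ = -(∑ l, ∑ p, Ω l p • ((ζ * Φ l - Φ l * ζ) * Φ p))
        - (∑ l, ∑ p, ℧ l p • ((ζ * Ψ l - Ψ l * ζ) * Ψ p))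
        - ((1 : ℂ) / 2) •
          (((∑ l, ∑ p, Ω l p • (Φ l * Φ p)) + ∑ l, ∑ p, ℧ l p • (Ψ l * Ψ p)) * ζ
            - ζ * ((∑ l, ∑ p, Ω l p • (Φ l * Φ p)) + ∑ l, ∑ p, ℧ l p • (Ψ l * Ψ p)))) :
    bG ξ = Complex.I • (Γ * ξ - ξ * Γ) + Δ ξ
        - (2 * Complex.I) • ∑ l, ∑ p, ((J l p : ℝ) : ℂ) • ((ξ * Φ l - Φ l * ξ) * L p) := by
  set X := ∑ l, ∑ p, ((J l p : ℝ) : ℂ) • (⁅ξ, Φ l⁆ * L p)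
  have hG : bG ξ = Complex.I • ⁅bH, ξ⁆ + dissipator bΩ bL ξ := by
    rw [hbG, dissipator]
    simp only [Ring.lie_def]
    abel
  have hΔ_dissipator : Δ ξ = dissipator Ω Φ ξ + dissipator ℧ Ψ ξ := by
    rw [hΔ, dissipator, dissipator]
    simp only [Ring.lie_def, add_mul, mul_add, smul_sub, smul_add]
    abel
  have hHamiltonian : ⁅bH, ξ⁆ = ⁅Γ, ξ⁆ - X := by
    rw [hbH, lie_add_add_sum_smul_mul_of_commute _ _ _ _ _ _ hξH hξL]
  have hDissipator : dissipator bΩ bL ξ = Δ ξ - Complex.I • X := by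
    rw [hbΩ, hbL, dissipator_fromBlocks, dissipator_add_of_commute _ _ _ _ hξL hΦL,
      hΔ_dissipator, hΩ]
    simp only [one_add_I_smul_sub_swap_div_two J hJ, neg_smul, mul_smul, Finset.sum_neg_distrib,
      ← Finset.smul_sum]
    abel
  rw [hG, hHamiltonian, hDissipator]
  simp only [X, Ring.lie_def]
  module

/-- Drift identity for the cascade connection of a quantum plant `(H, L)` and a
quantum filter `(Γ, Φ, Ψ)`: the GKSL drift of a filter variable `ξ` with respect
to the composite Hamiltonian `bH = H + Γ + ΦᵀJL`, coupling `bL = [(L+Φ); Ψ]` and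
block Itô matrix `bΩ = diag(Ω, ℧)` reduces to `i[Γ,ξ] + Δ(ξ) − 2i Σ [ξ,Φ_l]J_{lp}L_p`. -/
theorem stmt_15 {𝒜 : Type*} [Ring 𝒜] [Algebra ℂ 𝒜]
    {m μ : ℕ} (H Γ ξ : 𝒜) (L Φ : Fin m → 𝒜) (Ψ : Fin μ → 𝒜)
    (hξH : Commute ξ H) (hΓH : Commute Γ H)
    (hΦH : ∀ j, Commute (Φ j) H) (hΨH : ∀ k, Commute (Ψ k) H)
    (hξL : ∀ l, Commute ξ (L l)) (hΓL : ∀ l, Commute Γ (L l))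
    (hΦL : ∀ j l, Commute (Φ j) (L l)) (hΨL : ∀ k l, Commute (Ψ k) (L l))
    (J : Matrix (Fin m) (Fin m) ℝ) (hJ : Jᵀ = -J)
    (J' : Matrix (Fin μ) (Fin μ) ℝ) (hJ' : J'ᵀ = -J')
    (Ω : Matrix (Fin m) (Fin m) ℂ)
    (hΩ : Ω = 1 + Complex.I • J.map (Complex.ofReal))
    (℧ : Matrix (Fin μ) (Fin μ) ℂ)
    (h℧ : ℧ = 1 + Complex.I • J'.map (Complex.ofReal))
    (bΩ : Matrix (Fin m ⊕ Fin μ) (Fin m ⊕ Fin μ) ℂ)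
    (hbΩ : bΩ = Matrix.fromBlocks Ω 0 0 ℧)
    (bL : Fin m ⊕ Fin μ → 𝒜) (hbL : bL = Sum.elim (fun l => L l + Φ l) Ψ)
    (bH : 𝒜) (hbH : bH = H + Γ + ∑ l, ∑ p, ((J l p : ℝ) : ℂ) • (Φ l * L p))
    (bG : 𝒜 → 𝒜)
    (hbG : ∀ ζ, bG ζ = Complex.I • (bH * ζ - ζ * bH)
        - (∑ a, ∑ b, bΩ a b • ((ζ * bL a - bL a * ζ) * bL b))
        - ((1 : ℂ) / 2) • ((∑ a, ∑ b, bΩ a b • (bL a * bL b)) * ζ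
            - ζ * ∑ a, ∑ b, bΩ a b • (bL a * bL b)))
    (Δ : 𝒜 → 𝒜)
    (hΔ : ∀ ζ, Δ ζ = -(∑ l, ∑ p, Ω l p • ((ζ * Φ l - Φ l * ζ) * Φ p))
        - (∑ l, ∑ p, ℧ l p • ((ζ * Ψ l - Ψ l * ζ) * Ψ p))
        - ((1 : ℂ) / 2) •
          (((∑ l, ∑ p, Ω l p • (Φ l * Φ p)) + ∑ l, ∑ p, ℧ l p • (Ψ l * Ψ p)) * ζ
            - ζ * ((∑ l, ∑ p, Ω l p • (Φ l * Φ p)) + ∑ l, ∑ p, ℧ l p • (Ψ l * Ψ p)))) :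
    bG ξ = Complex.I • (Γ * ξ - ξ * Γ) + Δ ξ
        - (2 * Complex.I) • ∑ l, ∑ p, ((J l p : ℝ) : ℂ) • ((ξ * Φ l - Φ l * ξ) * L p) :=
  stmt_15_general H Γ ξ L Φ Ψ hξH hξL hΦL J hJ Ω hΩ ℧ bΩ hbΩ bL hbL bH hbH bG hbG Δ hΔ
end
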